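/- arXiv:1207.6674 — 4 statements merged into one kernel-verified Lean document; each statement's English description precedes it below -/
import Mathlib

section
/- Let (ρ₁,…,ρₙ) be real numbers in (0,1) with ρ₁+⋯+ρₙ < 1 (so self-similar sets with these ratios in ℝ exist with strong separation). If D and D' are two attractors of IFSs on ℝ consisting of similarities with contraction ratios exactly ρ₁,…,ρₙ, each satisfying the strong separation condition, then D and D' are Lipschitz equivalent, i.e., there is a bi-Lipschitz bijection f : D → D'. -/
noncomputable section

open Set Metric MeasureTheory

/-- Distance between two sets. -/
def setDist {X : Type*} [MetricSpace X] (A B : Set X) : ℝ := sInf (Set.image2 dist A B)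

/-- Lipschitz equivalence of two sets: a bi-Lipschitz bijection between them. -/
def LipEquivOn {X Y : Type*} [MetricSpace X] [MetricSpace Y] (E : Set X) (F : Set Y) : Prop :=
  ∃ (f : X → Y) (c c' : ℝ), 0 < c ∧ c ≤ c' ∧ Set.BijOn f E F ∧
    ∀ x ∈ E, ∀ y ∈ E, c * dist x y ≤ dist (f x) (f y) ∧ dist (f x) (f y) ≤ c' * dist x y

/-- The affine contraction `x ↦ ρ i * x + t i`. -/
def affMap (r t : ℕ → ℝ) (i : ℕ) (x : ℝ) : ℝ := r i * x + t i

/-- Composition of the affine maps along a word (first letter outermost). -/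
def affWord (r t : ℕ → ℝ) : List ℕ → ℝ → ℝ
  | [] => id
  | i :: w => affMap r t i ∘ affWord r t w

/-- Cylinder of a general IFS for a word over `Fin n`. -/
def cylW {X : Type*} {n : ℕ} (Ψ : Fin n → X → X) (F : Set X) (w : List (Fin n)) : Set X :=
  (w.foldr (fun i g => Ψ i ∘ g) id) '' F

/-- A (separable) contraction vector `(ρ 0, …, ρ (n-1))` in `ℝ`. -/
structure ContractionVec (n : ℕ) (ρ : ℕ → ℝ) : Prop where
  three_le : 3 ≤ n
  pos : ∀ i, i < n → 0 < ρ i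
  lt_one : ∀ i, i < n → ρ i < 1
  sum_lt : (∑ i ∈ Finset.range n, ρ i) < 1

/-- The touching IFS of the standing setup, together with its attractor `T`. -/
structure TouchingIFS (n : ℕ) (ρ : ℕ → ℝ) where
  t : ℕ → ℝ
  T : Set ℝ
  order : ∀ i, i + 1 < n → affMap ρ t i 1 ≤ affMap ρ t (i + 1) 0
  left0 : affMap ρ t 0 0 = 0
  right1 : affMap ρ t (n - 1) 1 = 1
  touch_ex : ∃ i, i + 1 < n ∧ affMap ρ t i 1 = affMap ρ t (i + 1) 0
  compactT : IsCompact T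
  nonemptyT : T.Nonempty
  invT : T = ⋃ i ∈ Finset.range n, affMap ρ t i '' T

/-- The dust-like, equally spaced IFS of the standing setup, with attractor `D`. -/
structure DustIFS (n : ℕ) (ρ : ℕ → ℝ) where
  d : ℕ → ℝ
  D : Set ℝ
  left0 : affMap ρ d 0 0 = 0
  right1 : affMap ρ d (n - 1) 1 = 1
  equal_gap : ∀ i, i + 1 < n →
    affMap ρ d (i + 1) 0 - affMap ρ d i 1 = (1 - ∑ j ∈ Finset.range n, ρ j) / (n - 1)
  compactD : IsCompact D
  nonemptyD : D.Nonempty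
  invD : D = ⋃ i ∈ Finset.range n, affMap ρ d i '' D

variable {n : ℕ} {ρ : ℕ → ℝ}

/-- Cylinder `T_w`. -/
def TouchingIFS.cyl (S : TouchingIFS n ρ) (w : List ℕ) : Set ℝ := affWord ρ S.t w '' S.T

/-- `i` is a (left) touching letter. -/
def TouchingIFS.touch (S : TouchingIFS n ρ) (i : ℕ) : Prop :=
  i + 1 < n ∧ affMap ρ S.t i 1 = affMap ρ S.t (i + 1) 0

/-- Left touching patch `L_k(T_w)` (with `α` the initial touching run length). -/
def TouchingIFS.patchL (S : TouchingIFS n ρ) (α : ℕ) (w : List ℕ) (k : ℕ) : Set ℝ :=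
  ⋃ j ∈ Finset.range α, S.cyl (w ++ List.replicate k 0 ++ [j])

/-- Right touching patch `R_k(T_w)` (with `β` the final touching run length). -/
def TouchingIFS.patchR (S : TouchingIFS n ρ) (β : ℕ) (w : List ℕ) (k : ℕ) : Set ℝ :=
  ⋃ j ∈ Finset.Ico (n - β) n, S.cyl (w ++ List.replicate k (n - 1) ++ [j])

/-- `α` is the number of successive touching intervals at the beginning. -/
def TouchingIFS.alphaRun (S : TouchingIFS n ρ) (α : ℕ) : Prop :=
  1 ≤ α ∧ α < n ∧ (∀ i, i + 1 < α → S.touch i) ∧ ¬ S.touch (α - 1)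

/-- `β` is the number of successive touching intervals at the end. -/
def TouchingIFS.betaRun (S : TouchingIFS n ρ) (β : ℕ) : Prop :=
  1 ≤ β ∧ β < n ∧ (∀ i, n - β ≤ i → i + 1 < n → S.touch i) ∧ ¬ S.touch (n - β - 1)

/-- Cylinder `D_w`. -/
def DustIFS.cyl (Q : DustIFS n ρ) (w : List ℕ) : Set ℝ := affWord ρ Q.d w '' Q.D

/-- Left patch `L_k(D_w)`. -/
def DustIFS.patchL (Q : DustIFS n ρ) (α : ℕ) (w : List ℕ) (k : ℕ) : Set ℝ :=
  ⋃ j ∈ Finset.range α, Q.cyl (w ++ List.replicate k 0 ++ [j])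

/-- Right patch `R_k(D_w)`. -/
def DustIFS.patchR (Q : DustIFS n ρ) (β : ℕ) (w : List ℕ) (k : ℕ) : Set ℝ :=
  ⋃ j ∈ Finset.Ico (n - β) n, Q.cyl (w ++ List.replicate k (n - 1) ++ [j])

/-- `τ k` is the unique positive integer with `ρₙᵏ ρ₁ < ρ₁ ^ τ(k) ≤ ρₙᵏ`. -/
def tauSpec (ρ : ℕ → ℝ) (n : ℕ) (τ : ℕ → ℕ) : Prop :=
  ∀ k, 1 ≤ k → 1 ≤ τ k ∧ ρ (n - 1) ^ k * ρ 0 < ρ 0 ^ τ k ∧ ρ 0 ^ τ k ≤ ρ (n - 1) ^ k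

/-- `Cᵏ = R_k(T_{i₀}) ∪ L_{τ(k)}(T_{i₀+1})`. -/
def Cset (S : TouchingIFS n ρ) (α β i₀ : ℕ) (τ : ℕ → ℕ) (k : ℕ) : Set ℝ :=
  S.patchR β [i₀] k ∪ S.patchL α [i₀ + 1] (τ k)

/-- The touching letter `i` is left substitutable. -/
def TouchingIFS.LeftSub (S : TouchingIFS n ρ) (α : ℕ) (i : ℕ) : Prop :=
  ∃ (w : List ℕ) (a : ℕ) (k k' : ℕ), (∀ b ∈ w ++ [a], b < n) ∧
    Metric.diam (S.patchL α [i + 1] k) = Metric.diam (S.patchL α (i :: (w ++ [a])) k') ∧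
    a ≠ 0 ∧ ∀ ℓ, S.touch ℓ → a ≠ ℓ + 1

/-- The touching letter `i` is right substitutable. -/
def TouchingIFS.RightSub (S : TouchingIFS n ρ) (β : ℕ) (i : ℕ) : Prop :=
  ∃ (w : List ℕ) (a : ℕ) (k k' : ℕ), (∀ b ∈ w ++ [a], b < n) ∧
    Metric.diam (S.patchR β [i] k) = Metric.diam (S.patchR β ((i + 1) :: (w ++ [a])) k') ∧
    a ≠ n - 1 ∧ ¬ S.touch a

/-- Convex hull of a bounded set of reals: the minimal closed interval containing it. -/
def CH (B : Set ℝ) : Set ℝ := Set.Icc (sInf B) (sSup B)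

/-- `[a,b]` is a maximal run of touching letters (a first-level connected component). -/
def TouchingIFS.run (S : TouchingIFS n ρ) (a b : ℕ) : Prop :=
  a ≤ b ∧ b < n ∧ (∀ i, a ≤ i → i < b → S.touch i) ∧
  (a = 0 ∨ ¬ S.touch (a - 1)) ∧ (b = n - 1 ∨ ¬ S.touch b)

/-- Membership in the class `𝒯⁽¹⁾`: a `T`-separate copy `Ψ_w(T⁽¹⁾_j)`. -/
def TouchingIFS.T1mem (S : TouchingIFS n ρ) (X : Set ℝ) : Prop :=
  ∃ (w : List ℕ) (a b : ℕ), (∀ c ∈ w, c < n) ∧ S.run a b ∧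
    X = affWord ρ S.t w '' (⋃ j ∈ Finset.Icc a b, S.cyl [j]) ∧
    0 < setDist X (S.T \ X)

/-- Membership in the class `𝒯⁽²⁾`: a copy `Ψ_w(T⁽²⁾_i) = Ψ_w(R₀(T_i) ∪ L₀(T_{i+1}))`. -/
def TouchingIFS.T2mem (S : TouchingIFS n ρ) (α β : ℕ) (X : Set ℝ) : Prop :=
  ∃ (w : List ℕ) (i : ℕ), (∀ c ∈ w, c < n) ∧ S.touch i ∧
    X = affWord ρ S.t w '' (S.patchR β [i] 0 ∪ S.patchL α [i + 1] 0)

/-- An admissible family for the simple decomposition of `E` by the `A i`. -/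
def GoodFam (E : Set ℝ) {k : ℕ} (A : Fin k → Set ℝ) (𝒮 : Finset (Set ℝ)) : Prop :=
  (∀ B ∈ 𝒮, IsCompact B ∧ B ⊆ E) ∧ (⋃ B ∈ 𝒮, B) = E ∧
  (∀ B ∈ 𝒮, ∀ B' ∈ 𝒮, B ≠ B' → CH B ∩ CH B' = ∅) ∧ (∀ i, A i ∈ 𝒮)

/-!
Both attractors are parametrised by the same code space `ℕ → Fin n`: a code `σ` is sent to the
unique point of the nested cylinders `Φ_{σ 0} ∘ ⋯ ∘ Φ_{σ (k-1)} (D)`. Strong separation gives a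
gap `δ > 0` between the first-level pieces, so two codes whose first difference is at position
`k` are sent to points at distance between `ρ_{σ 0} ⋯ ρ_{σ (k-1)} δ` and
`ρ_{σ 0} ⋯ ρ_{σ (k-1)} diam D`. This scale depends only on the ratios, hence is the same for `D`
and `D'`, so one coding map composed with the inverse of the other is bi-Lipschitz.
-/

open Function Filter Topology PiNat

lemma injective_of_mul_le_dist {α Z : Type*} [MetricSpace Z] {p : α → Z} (w : α → α → ℝ)
    (hw : ∀ a b, a ≠ b → 0 < w a b) {ε : ℝ} (hε : 0 < ε)
    (hp : ∀ a b, a ≠ b → w a b * ε ≤ dist (p a) (p b)) : Injective p := fun a b hab => by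
  by_contra hne
  have := hp a b hne
  rw [hab, dist_self] at this
  exact (mul_pos (hw a b hne) hε).not_ge this

theorem lipEquivOn_range_of_comparable {α X Y : Type*} [Nonempty α] [MetricSpace X]
    [MetricSpace Y] (π : α → X) (π' : α → Y) (w : α → α → ℝ) (hw : ∀ a b, a ≠ b → 0 < w a b)
    {δ R δ' R' : ℝ} (hδ : 0 < δ) (hδR : δ ≤ R) (hδ' : 0 < δ') (hδR' : δ' ≤ R')
    (hπ : ∀ a b, a ≠ b → w a b * δ ≤ dist (π a) (π b) ∧ dist (π a) (π b) ≤ w a b * R)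
    (hπ' : ∀ a b, a ≠ b → w a b * δ' ≤ dist (π' a) (π' b) ∧ dist (π' a) (π' b) ≤ w a b * R') :
    LipEquivOn (range π) (range π') := by
  have hinj := injective_of_mul_le_dist w hw hδ fun a b h => (hπ a b h).1
  have hinj' := injective_of_mul_le_dist w hw hδ' fun a b h => (hπ' a b h).1
  set f := π' ∘ invFun π
  have hfπ : f ∘ π = π' := by ext a; simp [f, leftInverse_invFun hinj a]
  have hR : 0 < R := hδ.trans_le hδR
  have hR' : 0 < R' := hδ'.trans_le hδR'
  refine ⟨f, δ' / R, R' / δ, div_pos hδ' hR, ?_, ?_, ?_⟩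
  · calc δ' / R ≤ δ' / δ := div_le_div_of_nonneg_left hδ'.le hδ hδR
      _ ≤ R' / δ := div_le_div_of_nonneg_right hδR' hδ.le
  · rw [← hfπ, range_comp]
    refine InjOn.bijOn_image ?_
    rintro _ ⟨a, rfl⟩ _ ⟨b, rfl⟩ hab
    rw [← comp_apply (f := f), ← comp_apply (f := f), hfπ] at hab
    rw [hinj' hab]
  · simp only [forall_mem_range, ← comp_apply (f := f), hfπ]
    intro a b
    rcases eq_or_ne a b with rfl | hab
    · simp
    obtain ⟨hlo, hhi⟩ := hπ a b hab
    obtain ⟨hlo', hhi'⟩ := hπ' a b hab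
    constructor
    · calc δ' / R * dist (π a) (π b) ≤ δ' / R * (w a b * R) := by gcongr
        _ = w a b * δ' := by field_simp
        _ ≤ _ := hlo'
    · calc dist (π' a) (π' b) ≤ w a b * R' := hhi'
        _ = R' / δ * (w a b * δ) := by field_simp
        _ ≤ _ := by gcongr

namespace IFS

variable {X ι : Type*}

def wordRatio (r : ι → ℝ) (σ : ℕ → ι) (k : ℕ) : ℝ := ∏ l ∈ Finset.range k, r (σ l)

/-- `wordMap Φ σ k = Φ (σ 0) ∘ ⋯ ∘ Φ (σ (k - 1))`. -/
def wordMap (Φ : ι → X → X) (σ : ℕ → ι) : ℕ → X → X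
  | 0 => id
  | k + 1 => wordMap Φ σ k ∘ Φ (σ k)

def cylinder (Φ : ι → X → X) (D : Set X) (σ : ℕ → ι) (k : ℕ) : Set X := wordMap Φ σ k '' D

variable {Φ : ι → X → X} {r : ι → ℝ} {D : Set X}

lemma wordRatio_succ (σ : ℕ → ι) (k : ℕ) :
    wordRatio r σ (k + 1) = wordRatio r σ k * r (σ k) :=
  Finset.prod_range_succ _ _

lemma wordRatio_nonneg (hr : ∀ i, 0 ≤ r i) (σ : ℕ → ι) (k : ℕ) : 0 ≤ wordRatio r σ k :=
  Finset.prod_nonneg fun _ _ => hr _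

lemma wordRatio_pos (hr : ∀ i, 0 < r i) (σ : ℕ → ι) (k : ℕ) : 0 < wordRatio r σ k :=
  Finset.prod_pos fun _ _ => hr _

lemma tendsto_wordRatio_atTop [Finite ι] (hr0 : ∀ i, 0 ≤ r i) (hr1 : ∀ i, r i < 1)
    (σ : ℕ → ι) : Tendsto (wordRatio r σ) atTop (𝓝 0) := by
  obtain ⟨c, hc0, hc1, hrc⟩ : ∃ c, 0 ≤ c ∧ c < 1 ∧ ∀ i, r i ≤ c := by
    rcases isEmpty_or_nonempty ι with hι | hι
    · exact ⟨0, le_rfl, one_pos, isEmptyElim⟩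
    · obtain ⟨i₀, hi₀⟩ := Finite.exists_max r
      exact ⟨r i₀, hr0 i₀, hr1 i₀, hi₀⟩
  refine squeeze_zero (wordRatio_nonneg hr0 σ) (fun k => ?_)
    (tendsto_pow_atTop_nhds_zero_of_lt_one hc0 hc1)
  calc wordRatio r σ k ≤ ∏ _l ∈ Finset.range k, c :=
        Finset.prod_le_prod (fun _ _ => hr0 _) (fun _ _ => hrc _)
    _ = c ^ k := by simp

lemma wordMap_congr {σ τ : ℕ → ι} {k : ℕ} (h : ∀ l < k, σ l = τ l) :
    wordMap Φ σ k = wordMap Φ τ k := by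
  induction k with
  | zero => rfl
  | succ k ih =>
    rw [wordMap, wordMap, h k k.lt_succ_self, ih fun l hl => h l (hl.trans k.lt_succ_self)]

lemma cylinder_zero (σ : ℕ → ι) : cylinder Φ D σ 0 = D := image_id D

lemma cylinder_succ (σ : ℕ → ι) (k : ℕ) :
    cylinder Φ D σ (k + 1) = wordMap Φ σ k '' (Φ (σ k) '' D) :=
  image_comp _ _ _

lemma cylinder_succ_subset (hmaps : ∀ i, MapsTo (Φ i) D D) (σ : ℕ → ι) (k : ℕ) :
    cylinder Φ D σ (k + 1) ⊆ cylinder Φ D σ k := by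
  rw [cylinder_succ]
  exact image_mono (hmaps _).image_subset

lemma exists_code_of_mem (hinv : D ⊆ ⋃ i, Φ i '' D) {x : X} (hx : x ∈ D) :
    ∃ σ : ℕ → ι, ∀ k, x ∈ cylinder Φ D σ k := by
  have hpred : ∀ y ∈ D, ∃ i, ∃ z ∈ D, Φ i z = y := fun y hy => by simpa using hinv hy
  have : Nonempty ι := by obtain ⟨i, -⟩ := hpred x hx; exact ⟨i⟩
  choose! letter pred hpred using hpred
  let y (k : ℕ) := pred^[k] x
  have hy (k : ℕ) : y k ∈ D ∧ wordMap Φ (letter ∘ y) k (y k) = x := by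
    induction k with
    | zero => exact ⟨hx, rfl⟩
    | succ k ih =>
      obtain ⟨hmem, heq⟩ := hpred _ ih.1
      refine ⟨?_, ?_⟩
      · simpa [y, iterate_succ_apply'] using hmem
      · simp only [y, iterate_succ_apply', wordMap, comp_apply] at heq ih ⊢
        rw [heq, ih.2]
  exact ⟨letter ∘ y, fun k => ⟨y k, (hy k).1, (hy k).2⟩⟩

section Topology

variable [TopologicalSpace X]

lemma continuous_wordMap (hΦ : ∀ i, Continuous (Φ i)) (σ : ℕ → ι) (k : ℕ) :
    Continuous (wordMap Φ σ k) := by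
  induction k with
  | zero => exact continuous_id
  | succ k ih => exact ih.comp (hΦ _)

lemma exists_forall_mem_cylinder [T2Space X] (hΦ : ∀ i, Continuous (Φ i)) (hD : IsCompact D)
    (hDne : D.Nonempty) (hmaps : ∀ i, MapsTo (Φ i) D D) (σ : ℕ → ι) :
    ∃ x, ∀ k, x ∈ cylinder Φ D σ k := by
  have hcompact (k : ℕ) : IsCompact (cylinder Φ D σ k) := hD.image (continuous_wordMap hΦ σ k)
  simpa using IsCompact.nonempty_iInter_of_sequence_nonempty_isCompact_isClosed _
    (cylinder_succ_subset hmaps σ) (fun k => hDne.image _) (hcompact 0)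
    (fun k => (hcompact k).isClosed)

end Topology

section Metric

variable [MetricSpace X]

lemma continuous_of_dist_eq (hΦ : ∀ i x y, dist (Φ i x) (Φ i y) = r i * dist x y) (i : ι) :
    Continuous (Φ i) :=
  (LipschitzWith.of_dist_le' fun x y => (hΦ i x y).le).continuous

lemma dist_wordMap (hΦ : ∀ i x y, dist (Φ i x) (Φ i y) = r i * dist x y) (σ : ℕ → ι) (k : ℕ)
    (x y : X) : dist (wordMap Φ σ k x) (wordMap Φ σ k y) = wordRatio r σ k * dist x y := by
  induction k generalizing x y with
  | zero => simp [wordMap, wordRatio]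
  | succ k ih => rw [wordMap, comp_apply, comp_apply, ih, hΦ, wordRatio_succ, mul_assoc]

lemma dist_le_of_mem_cylinder (hΦ : ∀ i x y, dist (Φ i x) (Φ i y) = r i * dist x y)
    (hr : ∀ i, 0 ≤ r i) (hD : Bornology.IsBounded D) {σ : ℕ → ι} {k : ℕ} {x y : X}
    (hx : x ∈ cylinder Φ D σ k) (hy : y ∈ cylinder Φ D σ k) :
    dist x y ≤ wordRatio r σ k * diam D := by
  obtain ⟨a, ha, rfl⟩ := hx
  obtain ⟨b, hb, rfl⟩ := hy
  rw [dist_wordMap hΦ]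
  exact mul_le_mul_of_nonneg_left (dist_le_diam_of_mem hD ha hb) (wordRatio_nonneg hr σ k)

lemma eq_of_forall_mem_cylinder [Finite ι]
    (hΦ : ∀ i x y, dist (Φ i x) (Φ i y) = r i * dist x y) (hr0 : ∀ i, 0 ≤ r i)
    (hr1 : ∀ i, r i < 1) (hD : Bornology.IsBounded D) {σ : ℕ → ι} {x y : X}
    (hx : ∀ k, x ∈ cylinder Φ D σ k) (hy : ∀ k, y ∈ cylinder Φ D σ k) : x = y := by
  have hlim : Tendsto (fun k => wordRatio r σ k * diam D) atTop (𝓝 0) := by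
    simpa using (tendsto_wordRatio_atTop hr0 hr1 σ).mul_const (diam D)
  exact dist_le_zero.1 <| ge_of_tendsto' hlim fun k =>
    dist_le_of_mem_cylinder hΦ hr0 hD (hx k) (hy k)

lemma exists_pos_le_dist_of_pairwise_disjoint [Finite ι] (hΦ : ∀ i, Continuous (Φ i))
    (hD : IsCompact D) (hsep : Pairwise (Disjoint on fun i => Φ i '' D)) :
    ∃ δ > 0, ∀ i j, i ≠ j → ∀ a ∈ Φ i '' D, ∀ b ∈ Φ j '' D, δ ≤ dist a b := by
  have hpair (i j : ι) : ∀ᶠ δ in 𝓝[>] (0 : ℝ),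
      i ≠ j → ∀ a ∈ Φ i '' D, ∀ b ∈ Φ j '' D, δ ≤ dist a b := by
    rcases eq_or_ne i j with rfl | hij
    · simp
    obtain ⟨ε, hε, hlt⟩ := Metric.exists_pos_forall_lt_edist (hD.image (hΦ i))
      (hD.image (hΦ j)).isClosed (hsep hij)
    filter_upwards [Ioo_mem_nhdsGT (NNReal.coe_pos.2 hε)] with δ hδ _ a ha b hb
    have := hlt a ha b hb
    rw [edist_nndist, ENNReal.coe_lt_coe, ← NNReal.coe_lt_coe, coe_nndist] at this
    linarith [(mem_Ioo.1 hδ).2]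
  obtain ⟨δ, hδ, hδpos⟩ :=
    ((eventually_all.2 fun i => eventually_all.2 (hpair i)).and self_mem_nhdsWithin).exists
  exact ⟨δ, hδpos, hδ⟩

lemma wordRatio_firstDiff_mul_le_dist (hΦ : ∀ i x y, dist (Φ i x) (Φ i y) = r i * dist x y)
    (hr : ∀ i, 0 ≤ r i) {δ : ℝ}
    (hδ : ∀ i j, i ≠ j → ∀ a ∈ Φ i '' D, ∀ b ∈ Φ j '' D, δ ≤ dist a b)
    {σ τ : ℕ → ι} (hστ : σ ≠ τ) {x y : X} (hx : x ∈ cylinder Φ D σ (firstDiff σ τ + 1))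
    (hy : y ∈ cylinder Φ D τ (firstDiff σ τ + 1)) :
    wordRatio r σ (firstDiff σ τ) * δ ≤ dist x y := by
  rw [cylinder_succ] at hx hy
  obtain ⟨a, ha, rfl⟩ := hx
  obtain ⟨b, hb, rfl⟩ := hy
  rw [← wordMap_congr (σ := σ) (τ := τ) fun l hl => apply_eq_of_lt_firstDiff hl, dist_wordMap hΦ]
  exact mul_le_mul_of_nonneg_left (hδ _ _ (apply_firstDiff_ne hστ) a ha b hb)
    (wordRatio_nonneg hr σ _)

theorem exists_coding [Finite ι] (hΦ : ∀ i x y, dist (Φ i x) (Φ i y) = r i * dist x y)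
    (hr0 : ∀ i, 0 < r i) (hr1 : ∀ i, r i < 1) (hD : IsCompact D) (hDne : D.Nonempty)
    (hinv : D = ⋃ i, Φ i '' D) (hsep : Pairwise (Disjoint on fun i => Φ i '' D)) :
    ∃ π : (ℕ → ι) → X, range π = D ∧ ∃ δ R, 0 < δ ∧ δ ≤ R ∧ ∀ σ τ, σ ≠ τ →
      wordRatio r σ (firstDiff σ τ) * δ ≤ dist (π σ) (π τ) ∧
      dist (π σ) (π τ) ≤ wordRatio r σ (firstDiff σ τ) * R := by
  have hr0' (i : ι) : 0 ≤ r i := (hr0 i).le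
  have hcont := continuous_of_dist_eq hΦ
  have hmaps (i : ι) : MapsTo (Φ i) D D := fun x hx =>
    hinv.ge (mem_iUnion_of_mem i (mem_image_of_mem _ hx))
  choose π hπ using exists_forall_mem_cylinder hcont hD hDne hmaps
  obtain ⟨δ, hδ, hsepδ⟩ := exists_pos_le_dist_of_pairwise_disjoint hcont hD hsep
  refine ⟨π, ?_, δ, max δ (diam D), hδ, le_max_left _ _, fun σ τ hστ => ⟨?_, ?_⟩⟩
  · refine (range_subset_iff.2 fun σ => by simpa only [cylinder_zero] using hπ σ 0).antisymm ?_
    intro x hx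
    obtain ⟨σ, hσ⟩ := exists_code_of_mem hinv.subset hx
    exact ⟨σ, eq_of_forall_mem_cylinder hΦ hr0' hr1 hD.isBounded (hπ σ) hσ⟩
  · exact wordRatio_firstDiff_mul_le_dist hΦ hr0' hsepδ hστ (hπ σ _) (hπ τ _)
  · have hτ : π τ ∈ cylinder Φ D σ (firstDiff σ τ) := by
      rw [cylinder, wordMap_congr (σ := σ) (τ := τ) fun l hl => apply_eq_of_lt_firstDiff hl]
      exact hπ τ _
    calc dist (π σ) (π τ) ≤ wordRatio r σ (firstDiff σ τ) * diam D :=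
          dist_le_of_mem_cylinder hΦ hr0' hD.isBounded (hπ σ _) hτ
      _ ≤ _ := by gcongr; exacts [wordRatio_nonneg hr0' σ _, le_max_right _ _]

end Metric

end IFS

theorem dustlike_lipEquiv_general {n : ℕ} (hn : 1 ≤ n) (ρ : Fin n → ℝ)
    (hpos : ∀ i, 0 < ρ i) (hlt : ∀ i, ρ i < 1)
    (d d' : Fin n → ℝ) (D D' : Set ℝ)
    (hDc : IsCompact D) (hDne : D.Nonempty)
    (hDinv : D = ⋃ i, (fun x => ρ i * x + d i) '' D)
    (hDdisj : ∀ i j, i ≠ j →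
      ((fun x => ρ i * x + d i) '' D) ∩ ((fun x => ρ j * x + d j) '' D) = ∅)
    (hD'c : IsCompact D') (hD'ne : D'.Nonempty)
    (hD'inv : D' = ⋃ i, (fun x => ρ i * x + d' i) '' D')
    (hD'disj : ∀ i j, i ≠ j →
      ((fun x => ρ i * x + d' i) '' D') ∩ ((fun x => ρ j * x + d' j) '' D') = ∅) :
    LipEquivOn D D' := by
  have hsim (t : Fin n → ℝ) (i : Fin n) (x y : ℝ) :
      dist (ρ i * x + t i) (ρ i * y + t i) = ρ i * dist x y := by
    rw [Real.dist_eq, Real.dist_eq, add_sub_add_right_eq_sub, ← mul_sub, abs_mul,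
      abs_of_pos (hpos i)]
  obtain ⟨π, rfl, δ, R, hδ, hδR, hπ⟩ := IFS.exists_coding (Φ := fun i x => ρ i * x + d i)
    (hsim d) hpos hlt hDc hDne hDinv fun i j hij => disjoint_iff_inter_eq_empty.2 (hDdisj i j hij)
  obtain ⟨π', rfl, δ', R', hδ', hδR', hπ'⟩ := IFS.exists_coding (Φ := fun i x => ρ i * x + d' i)
    (hsim d') hpos hlt hD'c hD'ne hD'inv
    fun i j hij => disjoint_iff_inter_eq_empty.2 (hD'disj i j hij)
  have : Nonempty (ℕ → Fin n) := ⟨fun _ => ⟨0, hn⟩⟩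
  exact lipEquivOn_range_of_comparable π π' _ (fun σ τ _ => IFS.wordRatio_pos hpos σ _)
    hδ hδR hδ' hδR' hπ hπ'

/-- any two dust-like self-similar sets in ℝ with the same
contraction vector are Lipschitz equivalent. -/
theorem dustlike_lipEquiv {n : ℕ} (hn : 1 ≤ n) (ρ : Fin n → ℝ)
    (hpos : ∀ i, 0 < ρ i) (hlt : ∀ i, ρ i < 1) (hsum : (∑ i, ρ i) < 1)
    (d d' : Fin n → ℝ) (D D' : Set ℝ)
    (hDc : IsCompact D) (hDne : D.Nonempty)
    (hDinv : D = ⋃ i, (fun x => ρ i * x + d i) '' D)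
    (hDdisj : ∀ i j, i ≠ j →
      ((fun x => ρ i * x + d i) '' D) ∩ ((fun x => ρ j * x + d j) '' D) = ∅)
    (hD'c : IsCompact D') (hD'ne : D'.Nonempty)
    (hD'inv : D' = ⋃ i, (fun x => ρ i * x + d' i) '' D')
    (hD'disj : ∀ i j, i ≠ j →
      ((fun x => ρ i * x + d' i) '' D') ∩ ((fun x => ρ j * x + d' j) '' D') = ∅) :
    LipEquivOn D D' :=
  dustlike_lipEquiv_general hn ρ hpos hlt d d' D D' hDc hDne hDinv hDdisj hD'c hD'ne hD'inv hD'disj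
end
end

section
/- With the touching IFS {Ψᵢ}ᵢ₌₁ⁿ and attractor T as in the standing setup, i₀ a touching letter, ρ₁ ≥ ρₙ, and τ(k) the unique positive integer with ρₙᵏρ₁ < ρ₁^{τ(k)} ≤ ρₙᵏ, define Cᵏ = R_k(T_{i₀}) ∪ L_{τ(k)}(T_{i₀+1}). Then there exists λ > 0 such that Cᵏ is (T,λ)-separate for all k ≥ 1, i.e., d(Cᵏ, T∖Cᵏ) ≥ λ·diam Cᵏ. -/
noncomputable section

open Set Metric MeasureTheory

variable {n : ℕ} {ρ : ℕ → ℝ}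

section Helpers

variable {n : ℕ} {ρ : ℕ → ℝ}

lemma affMap_sub (t : ℕ → ℝ) (i : ℕ) (u v : ℝ) :
    affMap ρ t i u - affMap ρ t i v = ρ i * (u - v) := by
  simp only [affMap]; ring

lemma affMap_mono (t : ℕ → ℝ) {i : ℕ} (hi : 0 < ρ i) {u v : ℝ} (h : u ≤ v) :
    affMap ρ t i u ≤ affMap ρ t i v := by
  simp only [affMap]; nlinarith

lemma affMap_lt_rev (t : ℕ → ℝ) {i : ℕ} (hi : 0 < ρ i) {u v : ℝ}
    (h : affMap ρ t i u < affMap ρ t i v) : u < v := by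
  simp only [affMap] at h; nlinarith

namespace TouchingIFS

variable (hρ : ContractionVec n ρ) (S : TouchingIFS n ρ)
include hρ

lemma self01 {i : ℕ} (hi : i < n) : affMap ρ S.t i 0 ≤ affMap ρ S.t i 1 :=
  affMap_mono S.t (hρ.pos i hi) zero_le_one

lemma cross : ∀ j, j < n → ∀ i, i < j → affMap ρ S.t i 1 ≤ affMap ρ S.t j 0 := by
  intro j
  induction j with
  | zero => intro _ i hi; omega
  | succ j ih =>
    intro hj i hi
    rcases Nat.lt_succ_iff_lt_or_eq.mp hi with h | rfl
    · calc affMap ρ S.t i 1 ≤ affMap ρ S.t j 0 := ih (by omega) i h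
        _ ≤ affMap ρ S.t j 1 := self01 hρ S (by omega)
        _ ≤ affMap ρ S.t (j+1) 0 := S.order j hj
    · exact S.order i hj

lemma mono1 {i j : ℕ} (hij : i ≤ j) (hj : j < n) :
    affMap ρ S.t i 1 ≤ affMap ρ S.t j 1 := by
  rcases eq_or_lt_of_le hij with rfl | h
  · exact le_rfl
  · exact le_trans (cross hρ S j hj i h) (self01 hρ S hj)

lemma mono0 {i j : ℕ} (hij : i ≤ j) (hj : j < n) :
    affMap ρ S.t i 0 ≤ affMap ρ S.t j 0 := by
  rcases eq_or_lt_of_le hij with rfl | h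
  · exact le_rfl
  · exact le_trans (self01 hρ S (lt_of_lt_of_le h (le_of_lt hj) |> fun hin => lt_of_lt_of_le h hj.le)) (cross hρ S j hj i h)

omit hρ in lemma t0_eq : S.t 0 = 0 := by
  have := S.left0; simp only [affMap] at this; linarith

omit hρ in lemma f0_eq (x : ℝ) : affMap ρ S.t 0 x = ρ 0 * x := by
  simp [affMap, S.t0_eq]

lemma nonneg0 {i : ℕ} (hi : i < n) : 0 ≤ affMap ρ S.t i 0 := by
  rcases Nat.eq_zero_or_pos i with rfl | h
  · rw [S.left0]
  · calc (0:ℝ) = affMap ρ S.t 0 0 := (S.left0).symm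
      _ ≤ affMap ρ S.t 0 1 := self01 hρ S (by omega)
      _ ≤ affMap ρ S.t i 0 := cross hρ S i hi 0 h

lemma le_one1 {i : ℕ} (hi : i < n) : affMap ρ S.t i 1 ≤ 1 := by
  rcases eq_or_lt_of_le (Nat.le_sub_one_of_lt hi) with h | h
  · rw [h, S.right1]
  · calc affMap ρ S.t i 1 ≤ affMap ρ S.t (n-1) 0 := cross hρ S (n-1) (by omega) i h
      _ ≤ affMap ρ S.t (n-1) 1 := self01 hρ S (by omega)
      _ = 1 := S.right1

lemma maps01 {i : ℕ} (hi : i < n) {x : ℝ} (hx : x ∈ Set.Icc (0:ℝ) 1) :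
    affMap ρ S.t i x ∈ Set.Icc (0:ℝ) 1 := by
  constructor
  · exact le_trans (nonneg0 hρ S hi) (affMap_mono S.t (hρ.pos i hi) hx.1)
  · exact le_trans (affMap_mono S.t (hρ.pos i hi) hx.2) (le_one1 hρ S hi)

lemma iter01 {i : ℕ} (hi : i < n) (k : ℕ) {x : ℝ} (hx : x ∈ Set.Icc (0:ℝ) 1) :
    (affMap ρ S.t i)^[k] x ∈ Set.Icc (0:ℝ) 1 := by
  induction k with
  | zero => simpa using hx
  | succ k ihk =>
    rw [Function.iterate_succ_apply']
    exact maps01 hρ S hi ihk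

omit hρ in lemma iter_sub (i : ℕ) (k : ℕ) (u v : ℝ) :
    (affMap ρ S.t i)^[k] u - (affMap ρ S.t i)^[k] v = ρ i ^ k * (u - v) := by
  induction k with
  | zero => simp
  | succ k ihk =>
    rw [Function.iterate_succ_apply', Function.iterate_succ_apply',
      affMap_sub, ihk, pow_succ]
    ring

omit hρ in lemma iter_mono {i : ℕ} (hi : 0 < ρ i) (k : ℕ) {u v : ℝ} (h : u ≤ v) :
    (affMap ρ S.t i)^[k] u ≤ (affMap ρ S.t i)^[k] v := by
  induction k with
  | zero => simpa using h
  | succ k ihk =>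
    rw [Function.iterate_succ_apply', Function.iterate_succ_apply']
    exact affMap_mono S.t hi ihk

omit hρ in lemma mem_T {i : ℕ} (hi : i < n) {x : ℝ} (hx : x ∈ S.T) : affMap ρ S.t i x ∈ S.T := by
  rw [S.invT]
  exact Set.mem_iUnion₂.mpr ⟨i, Finset.mem_range.mpr hi, ⟨x, hx, rfl⟩⟩

omit hρ in lemma decomp {x : ℝ} (hx : x ∈ S.T) : ∃ j, j < n ∧ ∃ y ∈ S.T, x = affMap ρ S.t j y := by
  rw [S.invT] at hx
  simp only [Set.mem_iUnion, Finset.mem_range, Set.mem_image] at hx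
  obtain ⟨j, hj, y, hy, hxy⟩ := hx
  exact ⟨j, hj, y, hy, hxy.symm⟩

lemma T_subset_Icc : S.T ⊆ Set.Icc (0:ℝ) 1 := by
  have hM : sSup S.T ∈ S.T := S.compactT.sSup_mem S.nonemptyT
  have hm : sInf S.T ∈ S.T := S.compactT.sInf_mem S.nonemptyT
  have hbdd : BddAbove S.T := S.compactT.bddAbove
  have hbdd' : BddBelow S.T := S.compactT.bddBelow
  have hM1 : sSup S.T ≤ 1 := by
    obtain ⟨j, hj, y, hy, hxy⟩ := S.decomp hM
    have hyM : y ≤ sSup S.T := le_csSup hbdd hy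
    have h1 : affMap ρ S.t j 1 ≤ 1 := le_one1 hρ S hj
    have hρj := hρ.pos j hj
    have hρj1 := hρ.lt_one j hj
    simp only [affMap] at hxy h1
    nlinarith
  have hm0 : 0 ≤ sInf S.T := by
    obtain ⟨j, hj, y, hy, hxy⟩ := S.decomp hm
    have hym : sInf S.T ≤ y := csInf_le hbdd' hy
    have h0 : 0 ≤ affMap ρ S.t j 0 := nonneg0 hρ S hj
    have hρj := hρ.pos j hj
    have hρj1 := hρ.lt_one j hj
    simp only [affMap] at hxy h0
    nlinarith
  intro x hx
  exact ⟨le_trans hm0 (csInf_le hbdd' hx), le_trans (le_csSup hbdd hx) hM1⟩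

lemma zero_mem_T : (0:ℝ) ∈ S.T := by
  obtain ⟨x₀, hx₀⟩ := S.nonemptyT
  have hmem : ∀ m : ℕ, ρ 0 ^ m * x₀ ∈ S.T := by
    intro m
    induction m with
    | zero => simpa using hx₀
    | succ m ihm =>
      have := mem_T S (show 0 < n by have := hρ.three_le; omega) ihm
      rwa [f0_eq S, ← mul_assoc, ← pow_succ'] at this
  have hn3 := hρ.three_le
  have hρ0 := hρ.pos 0 (by omega)
  have hρ1 := hρ.lt_one 0 (by omega)
  have htend : Filter.Tendsto (fun m : ℕ => ρ 0 ^ m * x₀) Filter.atTop (nhds 0) := by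
    have : Filter.Tendsto (fun m : ℕ => ρ 0 ^ m) Filter.atTop (nhds 0) :=
      tendsto_pow_atTop_nhds_zero_of_lt_one (le_of_lt hρ0) hρ1
    simpa using this.mul_const x₀
  exact S.compactT.isClosed.mem_of_tendsto htend (Filter.Eventually.of_forall hmem)

end TouchingIFS

lemma affWord_append (t : ℕ → ℝ) (w w' : List ℕ) :
    affWord ρ t (w ++ w') = affWord ρ t w ∘ affWord ρ t w' := by
  induction w with
  | nil => rfl
  | cons a w ih => simp [affWord, ih, Function.comp_assoc]

lemma affWord_replicate (t : ℕ → ℝ) (k : ℕ) (b : ℕ) :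
    affWord ρ t (List.replicate k b) = (affMap ρ t b)^[k] := by
  induction k with
  | zero => rfl
  | succ k ih =>
    rw [List.replicate_succ, Function.iterate_succ']
    simp [affWord, ih]

lemma affWord_special (t : ℕ → ℝ) (a : ℕ) (k b c : ℕ) (x : ℝ) :
    affWord ρ t ([a] ++ List.replicate k b ++ [c]) x
      = affMap ρ t a ((affMap ρ t b)^[k] (affMap ρ t c x)) := by
  rw [affWord_append, affWord_append, affWord_replicate]
  simp [affWord]

lemma affWord_special' (t : ℕ → ℝ) (a : ℕ) (k b c : ℕ) (x : ℝ) :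
    affWord ρ t (a :: (List.replicate k b ++ [c])) x
      = affMap ρ t a ((affMap ρ t b)^[k] (affMap ρ t c x)) :=
  affWord_special t a k b c x

end Helpers


section Main

variable {n : ℕ} {ρ : ℕ → ℝ}

namespace TouchingIFS

variable (hρ : ContractionVec n ρ) (S : TouchingIFS n ρ)

omit hρ in lemma iter_zero0 (m : ℕ) : (affMap ρ S.t 0)^[m] (0:ℝ) = 0 := by
  induction m with
  | zero => simp
  | succ m ih => rw [Function.iterate_succ_apply', ih, S.left0]

omit hρ in lemma iter_one1 (k : ℕ) : (affMap ρ S.t (n-1))^[k] (1:ℝ) = 1 := by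
  induction k with
  | zero => simp
  | succ k ih => rw [Function.iterate_succ_apply', ih, S.right1]

omit hρ in lemma mem_patchR (a k : ℕ) {β : ℕ} {z : ℝ} :
    z ∈ S.patchR β [a] k ↔ ∃ j, (n - β ≤ j ∧ j < n) ∧ ∃ x ∈ S.T,
      affMap ρ S.t a ((affMap ρ S.t (n-1))^[k] (affMap ρ S.t j x)) = z := by
  simp [TouchingIFS.patchR, TouchingIFS.cyl, affWord_special', Finset.mem_Ico]

omit hρ in lemma mem_patchL (a m : ℕ) {α : ℕ} {z : ℝ} :
    z ∈ S.patchL α [a] m ↔ ∃ j, j < α ∧ ∃ x ∈ S.T,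
      affMap ρ S.t a ((affMap ρ S.t 0)^[m] (affMap ρ S.t j x)) = z := by
  simp [TouchingIFS.patchL, TouchingIFS.cyl, affWord_special', Finset.mem_range]

include hρ

lemma mem01_0 {i : ℕ} (hi : i < n) : affMap ρ S.t i 0 ∈ Set.Icc (0:ℝ) 1 :=
  maps01 hρ S hi ⟨le_rfl, zero_le_one⟩

lemma mem01_1 {i : ℕ} (hi : i < n) : affMap ρ S.t i 1 ∈ Set.Icc (0:ℝ) 1 :=
  maps01 hρ S hi ⟨zero_le_one, le_rfl⟩

lemma lemR {β : ℕ} (hβ1 : 1 ≤ β) (hβn : β < n) :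
    ∀ k, ∀ x ∈ S.T, (affMap ρ S.t (n-1))^[k] (affMap ρ S.t (n-β-1) 1) < x →
      ∃ j, n - β ≤ j ∧ j < n ∧ ∃ y ∈ S.T,
        x = (affMap ρ S.t (n-1))^[k] (affMap ρ S.t j y) := by
  have hn3 := hρ.three_le
  intro k
  induction k with
  | zero =>
    intro x hx hgt
    simp only [Function.iterate_zero, id_eq] at hgt ⊢
    obtain ⟨j, hj, y, hy, rfl⟩ := S.decomp hx
    refine ⟨j, ?_, hj, y, hy, rfl⟩
    by_contra hlt
    push_neg at hlt
    have h1 : affMap ρ S.t j y ≤ affMap ρ S.t j 1 :=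
      affMap_mono S.t (hρ.pos j hj) (S.T_subset_Icc hρ hy).2
    have h2 : affMap ρ S.t j 1 ≤ affMap ρ S.t (n-β-1) 1 :=
      mono1 hρ S (by omega) (by omega)
    linarith
  | succ k ih =>
    intro x hx hgt
    obtain ⟨j, hj, y, hy, rfl⟩ := S.decomp hx
    have hj' : j = n - 1 := by
      by_contra hne
      have hjlt : j < n - 1 := by omega
      have h1 : affMap ρ S.t j y ≤ affMap ρ S.t (n-1) 0 :=
        le_trans (affMap_mono S.t (hρ.pos j hj) (S.T_subset_Icc hρ hy).2)
          (cross hρ S (n-1) (by omega) j hjlt)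
      have h2 : affMap ρ S.t (n-1) 0 ≤
          (affMap ρ S.t (n-1))^[k+1] (affMap ρ S.t (n-β-1) 1) := by
        rw [Function.iterate_succ_apply']
        exact affMap_mono S.t (hρ.pos (n-1) (by omega))
          (S.iter01 hρ (by omega) k (S.mem01_1 hρ (by omega))).1
      linarith
    subst hj'
    rw [Function.iterate_succ_apply'] at hgt
    have hylt : (affMap ρ S.t (n-1))^[k] (affMap ρ S.t (n-β-1) 1) < y :=
      affMap_lt_rev S.t (hρ.pos (n-1) (by omega)) hgt
    obtain ⟨j', hj'1, hj'2, y', hy', hyeq⟩ := ih y hy hylt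
    exact ⟨j', hj'1, hj'2, y', hy',
      by rw [hyeq]; exact (Function.iterate_succ_apply' _ _ _).symm⟩

lemma lemL {α : ℕ} (hα1 : 1 ≤ α) (hαn : α < n) :
    ∀ m, ∀ x ∈ S.T, x < (affMap ρ S.t 0)^[m] (affMap ρ S.t α 0) →
      ∃ j, j < α ∧ ∃ y ∈ S.T, x = (affMap ρ S.t 0)^[m] (affMap ρ S.t j y) := by
  have hn3 := hρ.three_le
  intro m
  induction m with
  | zero =>
    intro x hx hlt
    simp only [Function.iterate_zero, id_eq] at hlt ⊢
    obtain ⟨j, hj, y, hy, rfl⟩ := S.decomp hx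
    refine ⟨j, ?_, y, hy, rfl⟩
    by_contra hge
    push_neg at hge
    have h1 : affMap ρ S.t α 0 ≤ affMap ρ S.t j 0 := mono0 hρ S hge hj
    have h2 : affMap ρ S.t j 0 ≤ affMap ρ S.t j y :=
      affMap_mono S.t (hρ.pos j hj) (S.T_subset_Icc hρ hy).1
    linarith
  | succ m ih =>
    intro x hx hlt
    obtain ⟨j, hj, y, hy, rfl⟩ := S.decomp hx
    have hj' : j = 0 := by
      by_contra hne
      have h1 : affMap ρ S.t 0 1 ≤ affMap ρ S.t j 0 :=
        cross hρ S j hj 0 (by omega)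
      have h2 : (affMap ρ S.t 0)^[m+1] (affMap ρ S.t α 0) ≤ affMap ρ S.t 0 1 := by
        rw [Function.iterate_succ_apply']
        exact affMap_mono S.t (hρ.pos 0 (by omega))
          (S.iter01 hρ (by omega) m (S.mem01_0 hρ hαn)).2
      have h3 : affMap ρ S.t j 0 ≤ affMap ρ S.t j y :=
        affMap_mono S.t (hρ.pos j hj) (S.T_subset_Icc hρ hy).1
      linarith
    subst hj'
    rw [Function.iterate_succ_apply'] at hlt
    have hylt : y < (affMap ρ S.t 0)^[m] (affMap ρ S.t α 0) :=
      affMap_lt_rev S.t (hρ.pos 0 (by omega)) hlt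
    obtain ⟨j', hj', y', hy', hyeq⟩ := ih y hy hylt
    exact ⟨j', hj', y', hy',
      by rw [hyeq]; exact (Function.iterate_succ_apply' _ _ _).symm⟩

end TouchingIFS

end Main

set_option maxHeartbeats 1000000 in
/-- the sets `Cᵏ = R_k(T_{i₀}) ∪ L_{τ(k)}(T_{i₀+1})` are uniformly
`(T,λ)`-separate. -/
theorem Cset_uniformly_separate {n : ℕ} {ρ : ℕ → ℝ} (hρ : ContractionVec n ρ)
    (S : TouchingIFS n ρ) (α β i₀ : ℕ)
    (hα : S.alphaRun α) (hβ : S.betaRun β) (hi₀ : S.touch i₀)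
    (hρ1n : ρ (n - 1) ≤ ρ 0) (τ : ℕ → ℕ) (hτ : tauSpec ρ n τ) :
    ∃ lam : ℝ, 0 < lam ∧ ∀ k, 1 ≤ k →
      lam * Metric.diam (Cset S α β i₀ τ k) ≤
        setDist (Cset S α β i₀ τ k) (S.T \ Cset S α β i₀ τ k) := by
  obtain ⟨hα1, hαn, -, hαt⟩ := hα
  obtain ⟨hβ1, hβn, -, hβt⟩ := hβ
  obtain ⟨hi₀n, hi₀e⟩ := hi₀
  have hn3 := hρ.three_le
  have hρi₀ := hρ.pos i₀ (by omega)
  have hρi₀1 := hρ.lt_one i₀ (by omega)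
  have hρi₁ := hρ.pos (i₀+1) hi₀n
  have hρi₁1 := hρ.lt_one (i₀+1) hi₀n
  have hρ0 := hρ.pos 0 (by omega)
  have hρ01 := hρ.lt_one 0 (by omega)
  have hρn := hρ.pos (n-1) (by omega)
  have hρn1 := hρ.lt_one (n-1) (by omega)
  have hidxβ : n - β - 1 + 1 = n - β := by omega
  have hδR : affMap ρ S.t (n-β-1) 1 < affMap ρ S.t (n-β) 0 := by
    have hle := S.order (n-β-1) (by omega)
    rw [hidxβ] at hle
    rcases lt_or_eq_of_le hle with h | h
    · exact h
    · exact absurd (show S.touch (n-β-1) from ⟨by omega, by rw [hidxβ]; exact h⟩) hβt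
  have hidxα : α - 1 + 1 = α := by omega
  have hδL : affMap ρ S.t (α-1) 1 < affMap ρ S.t α 0 := by
    have hle := S.order (α-1) (by omega)
    rw [hidxα] at hle
    rcases lt_or_eq_of_le hle with h | h
    · exact h
    · exact absurd (show S.touch (α-1) from ⟨by omega, by rw [hidxα]; exact h⟩) hαt
  obtain ⟨δR, hδRdef⟩ : ∃ x : ℝ, x = affMap ρ S.t (n-β) 0 - affMap ρ S.t (n-β-1) 1 := ⟨_, rfl⟩
  obtain ⟨δL, hδLdef⟩ : ∃ x : ℝ, x = affMap ρ S.t α 0 - affMap ρ S.t (α-1) 1 := ⟨_, rfl⟩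
  have hδRpos : 0 < δR := by rw [hδRdef]; linarith
  have hδLpos : 0 < δL := by rw [hδLdef]; linarith
  have hlam : 0 < min (ρ i₀ * δR) (ρ (i₀+1) * (ρ 0 * δL)) / 2 :=
    div_pos (lt_min (mul_pos hρi₀ hδRpos) (mul_pos hρi₁ (mul_pos hρ0 hδLpos))) two_pos
  refine ⟨min (ρ i₀ * δR) (ρ (i₀+1) * (ρ 0 * δL)) / 2, hlam, ?_⟩
  intro k hk
  obtain ⟨hτ1, hτlt, hτle⟩ := hτ k hk
  have hpown : (0:ℝ) < ρ (n-1) ^ k := pow_pos hρn _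
  have hpow0 : (0:ℝ) < ρ 0 ^ τ k := pow_pos hρ0 _
  -- endpoint quantities
  have hwR01 : (affMap ρ S.t (n-1))^[k] (affMap ρ S.t (n-β) 0) ∈ Set.Icc (0:ℝ) 1 :=
    S.iter01 hρ (by omega) k (S.mem01_0 hρ (by omega))
  have hwR'01 : (affMap ρ S.t (n-1))^[k] (affMap ρ S.t (n-β-1) 1) ∈ Set.Icc (0:ℝ) 1 :=
    S.iter01 hρ (by omega) k (S.mem01_1 hρ (by omega))
  have hwL01 : (affMap ρ S.t 0)^[τ k] (affMap ρ S.t (α-1) 1) ∈ Set.Icc (0:ℝ) 1 :=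
    S.iter01 hρ (by omega) (τ k) (S.mem01_1 hρ (by omega))
  have hwL'01 : (affMap ρ S.t 0)^[τ k] (affMap ρ S.t α 0) ∈ Set.Icc (0:ℝ) 1 :=
    S.iter01 hρ (by omega) (τ k) (S.mem01_0 hρ hαn)
  -- gap identities
  have hgapR : affMap ρ S.t i₀ ((affMap ρ S.t (n-1))^[k] (affMap ρ S.t (n-β) 0))
      - affMap ρ S.t i₀ ((affMap ρ S.t (n-1))^[k] (affMap ρ S.t (n-β-1) 1))
      = ρ i₀ * (ρ (n-1) ^ k * δR) := by
    rw [affMap_sub (ρ := ρ), S.iter_sub, ← hδRdef]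
  have hgapL : affMap ρ S.t (i₀+1) ((affMap ρ S.t 0)^[τ k] (affMap ρ S.t α 0))
      - affMap ρ S.t (i₀+1) ((affMap ρ S.t 0)^[τ k] (affMap ρ S.t (α-1) 1))
      = ρ (i₀+1) * (ρ 0 ^ τ k * δL) := by
    rw [affMap_sub (ρ := ρ), S.iter_sub, ← hδLdef]
  -- subset of interval
  have haRp : affMap ρ S.t i₀ ((affMap ρ S.t (n-1))^[k] (affMap ρ S.t (n-β) 0))
      ≤ affMap ρ S.t i₀ 1 := affMap_mono S.t hρi₀ hwR01.2
  have hpbL : affMap ρ S.t (i₀+1) 0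
      ≤ affMap ρ S.t (i₀+1) ((affMap ρ S.t 0)^[τ k] (affMap ρ S.t (α-1) 1)) :=
    affMap_mono S.t hρi₁ hwL01.1
  have haRbL : affMap ρ S.t i₀ ((affMap ρ S.t (n-1))^[k] (affMap ρ S.t (n-β) 0))
      ≤ affMap ρ S.t (i₀+1) ((affMap ρ S.t 0)^[τ k] (affMap ρ S.t (α-1) 1)) := by
    calc affMap ρ S.t i₀ ((affMap ρ S.t (n-1))^[k] (affMap ρ S.t (n-β) 0))
        ≤ affMap ρ S.t i₀ 1 := haRp
      _ = affMap ρ S.t (i₀+1) 0 := hi₀e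
      _ ≤ _ := hpbL
  have hsub : Cset S α β i₀ τ k ⊆ Set.Icc
      (affMap ρ S.t i₀ ((affMap ρ S.t (n-1))^[k] (affMap ρ S.t (n-β) 0)))
      (affMap ρ S.t (i₀+1) ((affMap ρ S.t 0)^[τ k] (affMap ρ S.t (α-1) 1))) := by
    rintro z (hz | hz)
    · rw [S.mem_patchR] at hz
      obtain ⟨j, ⟨hj1, hj2⟩, x, hx, rfl⟩ := hz
      have hx01 := S.T_subset_Icc hρ hx
      constructor
      · exact affMap_mono S.t hρi₀ (S.iter_mono hρn k
          (le_trans (TouchingIFS.mono0 hρ S hj1 hj2) (affMap_mono S.t (hρ.pos j hj2) hx01.1)))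
      · have h1 : affMap ρ S.t j x ≤ 1 :=
          le_trans (affMap_mono S.t (hρ.pos j hj2) hx01.2) (S.le_one1 hρ hj2)
        have h2 : (affMap ρ S.t (n-1))^[k] (affMap ρ S.t j x) ≤ 1 := by
          have := S.iter_mono hρn k h1
          rwa [S.iter_one1] at this
        calc affMap ρ S.t i₀ ((affMap ρ S.t (n-1))^[k] (affMap ρ S.t j x))
            ≤ affMap ρ S.t i₀ 1 := affMap_mono S.t hρi₀ h2
          _ = affMap ρ S.t (i₀+1) 0 := hi₀e
          _ ≤ _ := hpbL
    · rw [S.mem_patchL] at hz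
      obtain ⟨j, hj, x, hx, rfl⟩ := hz
      have hjn : j < n := by omega
      have hx01 := S.T_subset_Icc hρ hx
      constructor
      · have h0 : (0:ℝ) ≤ affMap ρ S.t j x :=
          le_trans (S.nonneg0 hρ hjn) (affMap_mono S.t (hρ.pos j hjn) hx01.1)
        have h2 : (0:ℝ) ≤ (affMap ρ S.t 0)^[τ k] (affMap ρ S.t j x) := by
          have := S.iter_mono hρ0 (τ k) h0
          rwa [S.iter_zero0] at this
        calc affMap ρ S.t i₀ ((affMap ρ S.t (n-1))^[k] (affMap ρ S.t (n-β) 0))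
            ≤ affMap ρ S.t i₀ 1 := haRp
          _ = affMap ρ S.t (i₀+1) 0 := hi₀e
          _ ≤ _ := affMap_mono S.t hρi₁ h2
      · have h1 : affMap ρ S.t j x ≤ affMap ρ S.t (α-1) 1 :=
          le_trans (affMap_mono S.t (hρ.pos j hjn) hx01.2) (TouchingIFS.mono1 hρ S (by omega) (by omega))
        exact affMap_mono S.t hρi₁ (S.iter_mono hρ0 (τ k) h1)
  -- diameter bound
  have hbound : Metric.diam (Cset S α β i₀ τ k) ≤ 2 * ρ (n-1) ^ k := by
    have h1 : Metric.diam (Cset S α β i₀ τ k)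
        ≤ affMap ρ S.t (i₀+1) ((affMap ρ S.t 0)^[τ k] (affMap ρ S.t (α-1) 1))
          - affMap ρ S.t i₀ ((affMap ρ S.t (n-1))^[k] (affMap ρ S.t (n-β) 0)) := by
      have := Metric.diam_mono hsub (Metric.isBounded_Icc _ _)
      rwa [Real.diam_Icc haRbL] at this
    have ewL : (affMap ρ S.t 0)^[τ k] (affMap ρ S.t (α-1) 1)
        = ρ 0 ^ τ k * affMap ρ S.t (α-1) 1 := by
      have h := S.iter_sub 0 (τ k) (affMap ρ S.t (α-1) 1) 0
      rw [S.iter_zero0] at h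
      linarith
    have ewR : 1 - (affMap ρ S.t (n-1))^[k] (affMap ρ S.t (n-β) 0)
        = ρ (n-1) ^ k * (1 - affMap ρ S.t (n-β) 0) := by
      have h := S.iter_sub (n-1) k 1 (affMap ρ S.t (n-β) 0)
      rwa [S.iter_one1] at h
    have d1 := affMap_sub (ρ := ρ) S.t (i₀+1) ((affMap ρ S.t 0)^[τ k] (affMap ρ S.t (α-1) 1)) 0
    have d2 := affMap_sub (ρ := ρ) S.t i₀ 1 ((affMap ρ S.t (n-1))^[k] (affMap ρ S.t (n-β) 0))
    have hm1 := S.mem01_1 hρ (show α-1 < n by omega)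
    have hm0 := S.mem01_0 hρ (show n-β < n by omega)
    have ht1 : affMap ρ S.t (i₀+1) ((affMap ρ S.t 0)^[τ k] (affMap ρ S.t (α-1) 1))
        - affMap ρ S.t (i₀+1) 0 ≤ ρ (n-1) ^ k := by
      rw [d1, ewL]
      have hmm : ρ (i₀+1) * affMap ρ S.t (α-1) 1 ≤ 1 :=
        mul_le_one₀ hρi₁1.le hm1.1 hm1.2
      have hprod : (0:ℝ) ≤ (1 - ρ (i₀+1) * affMap ρ S.t (α-1) 1) * ρ 0 ^ τ k :=
        mul_nonneg (by linarith) hpow0.le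
      linarith only [hprod, hτle]
    have ht2 : affMap ρ S.t i₀ 1
        - affMap ρ S.t i₀ ((affMap ρ S.t (n-1))^[k] (affMap ρ S.t (n-β) 0))
        ≤ ρ (n-1) ^ k := by
      rw [d2, ewR]
      have hmm : ρ i₀ * (1 - affMap ρ S.t (n-β) 0) ≤ 1 :=
        mul_le_one₀ hρi₀1.le (by linarith [hm0.2]) (by linarith [hm0.1])
      have hprod : (0:ℝ) ≤ (1 - ρ i₀ * (1 - affMap ρ S.t (n-β) 0)) * ρ (n-1) ^ k :=
        mul_nonneg (by linarith) hpown.le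
      linarith only [hprod]
    have := hi₀e
    linarith
  -- dichotomy
  have hdich : ∀ z ∈ S.T, z ∉ Cset S α β i₀ τ k →
      z ≤ affMap ρ S.t i₀ ((affMap ρ S.t (n-1))^[k] (affMap ρ S.t (n-β-1) 1)) ∨
      affMap ρ S.t (i₀+1) ((affMap ρ S.t 0)^[τ k] (affMap ρ S.t α 0)) ≤ z := by
    intro z hzT hzC
    simp only [Cset, Set.mem_union, not_or] at hzC
    obtain ⟨hzR, hzL⟩ := hzC
    obtain ⟨j, hj, y, hy, rfl⟩ := S.decomp hzT
    have hy01 := S.T_subset_Icc hρ hy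
    rcases lt_trichotomy j i₀ with hlt | heq | hgt
    · left
      calc affMap ρ S.t j y ≤ affMap ρ S.t j 1 := affMap_mono S.t (hρ.pos j hj) hy01.2
        _ ≤ affMap ρ S.t i₀ 0 := TouchingIFS.cross hρ S i₀ (by omega) j hlt
        _ ≤ _ := affMap_mono S.t hρi₀ hwR'01.1
    · subst heq
      by_cases hyA : y ≤ (affMap ρ S.t (n-1))^[k] (affMap ρ S.t (n-β-1) 1)
      · exact Or.inl (affMap_mono S.t hρi₀ hyA)
      · push_neg at hyA
        obtain ⟨j', hj'1, hj'2, y', hy', hyeq⟩ := S.lemR hρ hβ1 hβn k y hy hyA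
        exact absurd ((S.mem_patchR j k).mpr ⟨j', ⟨hj'1, hj'2⟩, y', hy', by rw [hyeq]⟩) hzR
    · rcases Nat.lt_or_ge j (i₀+2) with hj2 | hj2
      · have heq2 : j = i₀ + 1 := by omega
        subst heq2
        by_cases hyB : (affMap ρ S.t 0)^[τ k] (affMap ρ S.t α 0) ≤ y
        · exact Or.inr (affMap_mono S.t hρi₁ hyB)
        · push_neg at hyB
          obtain ⟨j', hj', y', hy', hyeq⟩ := S.lemL hρ hα1 hαn (τ k) y hy hyB
          exact absurd ((S.mem_patchL (i₀+1) (τ k)).mpr ⟨j', hj', y', hy', by rw [hyeq]⟩) hzL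
      · right
        calc affMap ρ S.t (i₀+1) ((affMap ρ S.t 0)^[τ k] (affMap ρ S.t α 0))
            ≤ affMap ρ S.t (i₀+1) 1 := affMap_mono S.t hρi₁ hwL'01.2
          _ ≤ affMap ρ S.t j 0 := TouchingIFS.cross hρ S j hj (i₀+1) (by omega)
          _ ≤ affMap ρ S.t j y := affMap_mono S.t (hρ.pos j hj) hy01.1
  -- nonemptiness facts
  have h0T : (0:ℝ) ∈ S.T := S.zero_mem_T hρ
  have hA'nn : (0:ℝ) ≤ affMap ρ S.t i₀ ((affMap ρ S.t (n-1))^[k] (affMap ρ S.t (n-β-1) 1)) :=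
    le_trans (S.nonneg0 hρ (by omega)) (affMap_mono S.t hρi₀ hwR'01.1)
  have haRpos : (0:ℝ) < affMap ρ S.t i₀ ((affMap ρ S.t (n-1))^[k] (affMap ρ S.t (n-β) 0)) := by
    linarith [hgapR, mul_pos hρi₀ (mul_pos hpown hδRpos)]
  have h0notC : (0:ℝ) ∉ Cset S α β i₀ τ k := fun h => absurd ((hsub h).1) (by linarith)
  have hcmem : affMap ρ S.t i₀ ((affMap ρ S.t (n-1))^[k] (affMap ρ S.t (n-1) 0))
      ∈ Cset S α β i₀ τ k :=
    Or.inl ((S.mem_patchR i₀ k).mpr ⟨n-1, ⟨by omega, by omega⟩, 0, h0T, rfl⟩)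
  -- distance lower bound
  obtain ⟨g, hgdef⟩ : ∃ x : ℝ, x = min (ρ i₀ * (ρ (n-1) ^ k * δR)) (ρ (i₀+1) * (ρ 0 ^ τ k * δL)) := ⟨_, rfl⟩
  have hsetdist : g ≤ setDist (Cset S α β i₀ τ k) (S.T \ Cset S α β i₀ τ k) := by
    show g ≤ sInf (Set.image2 dist (Cset S α β i₀ τ k) (S.T \ Cset S α β i₀ τ k))
    apply le_csInf
    · exact ⟨_, Set.mem_image2_of_mem hcmem ⟨h0T, h0notC⟩⟩
    · rintro d ⟨c, hc, z, ⟨hzT, hzC⟩, rfl⟩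
      have hc' := hsub hc
      rcases hdich z hzT hzC with h | h
      · calc g ≤ ρ i₀ * (ρ (n-1) ^ k * δR) := hgdef ▸ min_le_left _ _
          _ ≤ c - z := by linarith [hc'.1, hgapR]
          _ ≤ |c - z| := le_abs_self _
          _ = dist c z := (Real.dist_eq c z).symm
      · calc g ≤ ρ (i₀+1) * (ρ 0 ^ τ k * δL) := hgdef ▸ min_le_right _ _
          _ ≤ z - c := by linarith [hc'.2, hgapL]
          _ ≤ |c - z| := by rw [abs_sub_comm]; exact le_abs_self _
          _ = dist c z := (Real.dist_eq c z).symm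
  refine le_trans ?_ hsetdist
  have hdn : (0:ℝ) ≤ Metric.diam (Cset S α β i₀ τ k) := Metric.diam_nonneg
  calc min (ρ i₀ * δR) (ρ (i₀+1) * (ρ 0 * δL)) / 2 * Metric.diam (Cset S α β i₀ τ k)
      ≤ min (ρ i₀ * δR) (ρ (i₀+1) * (ρ 0 * δL)) / 2 * (2 * ρ (n-1) ^ k) :=
        mul_le_mul_of_nonneg_left hbound (le_of_lt hlam)
    _ = min (ρ i₀ * δR) (ρ (i₀+1) * (ρ 0 * δL)) * ρ (n-1) ^ k := by ring
    _ ≤ g := by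
        rw [hgdef]
        apply le_min
        · calc min (ρ i₀ * δR) (ρ (i₀+1) * (ρ 0 * δL)) * ρ (n-1) ^ k
              ≤ (ρ i₀ * δR) * ρ (n-1) ^ k :=
                mul_le_mul_of_nonneg_right (min_le_left _ _) (le_of_lt hpown)
            _ = ρ i₀ * (ρ (n-1) ^ k * δR) := by ring
        · calc min (ρ i₀ * δR) (ρ (i₀+1) * (ρ 0 * δL)) * ρ (n-1) ^ k
              ≤ (ρ (i₀+1) * (ρ 0 * δL)) * ρ (n-1) ^ k :=
                mul_le_mul_of_nonneg_right (min_le_right _ _) (le_of_lt hpown)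
            _ ≤ ρ (i₀+1) * (ρ 0 ^ τ k * δL) := by
                linarith [mul_le_mul_of_nonneg_left (le_of_lt hτlt)
                  (mul_nonneg hρi₁.le hδLpos.le)]
end
end

section
/- In the setup of the previous context, with τ(k) satisfying ρₙᵏρ₁ < ρ₁^{τ(k)} ≤ ρₙᵏ and Cᵏ = R_k(T_{i₀}) ∪ L_{τ(k)}(T_{i₀+1}), there exist constants c₁, c₂ > 0 such that c₁ρₙᵏ ≤ diam Cᵏ ≤ c₂ρₙᵏ for all k ≥ 1. -/
noncomputable section

open Set Metric MeasureTheory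

variable {n : ℕ} {ρ : ℕ → ℝ}

lemma affWord_append' (r t : ℕ → ℝ) (u v : List ℕ) (x : ℝ) :
    affWord r t (u ++ v) x = affWord r t u (affWord r t v x) := by
  induction u with
  | nil => rfl
  | cons i w ih => simp [affWord, Function.comp, ih]

lemma affWord_singleton' (r t : ℕ → ℝ) (i : ℕ) (x : ℝ) :
    affWord r t [i] x = affMap r t i x := rfl

lemma affWord_replicate_fix (r t : ℕ → ℝ) (i : ℕ) (c : ℝ)
    (h : affMap r t i c = c) (k : ℕ) (x : ℝ) :
    affWord r t (List.replicate k i) x = r i ^ k * (x - c) + c := by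
  induction k with
  | zero => simp [affWord]
  | succ k ih =>
    rw [List.replicate_succ]
    show affMap r t i (affWord r t (List.replicate k i) x) = _
    rw [ih]
    simp only [affMap] at h ⊢
    linear_combination h

/-- `diam Cᵏ ≍ ρₙᵏ`. -/
theorem Cset_diam_asymp {n : ℕ} {ρ : ℕ → ℝ} (hρ : ContractionVec n ρ)
    (S : TouchingIFS n ρ) (α β i₀ : ℕ)
    (hα : S.alphaRun α) (hβ : S.betaRun β) (hi₀ : S.touch i₀)
    (hρ1n : ρ (n - 1) ≤ ρ 0) (τ : ℕ → ℕ) (hτ : tauSpec ρ n τ) :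
    ∃ c₁ c₂ : ℝ, 0 < c₁ ∧ 0 < c₂ ∧ ∀ k, 1 ≤ k →
      c₁ * ρ (n - 1) ^ k ≤ Metric.diam (Cset S α β i₀ τ k) ∧
      Metric.diam (Cset S α β i₀ τ k) ≤ c₂ * ρ (n - 1) ^ k := by
  obtain ⟨hn3, hpos, hlt1, _hsum⟩ := hρ
  have hn0 : 0 < n := by omega
  have hn1 : n - 1 < n := by omega
  have hi1 : i₀ + 1 < n := hi₀.1
  have hi0n : i₀ < n := by omega
  have hf01 : ∀ i, i < n → affMap ρ S.t i 0 ≤ affMap ρ S.t i 1 := by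
    intro i hi; simp only [affMap]; nlinarith [hpos i hi]
  have hf1 : ∀ i, i < n → affMap ρ S.t i 1 ≤ 1 := by
    have key : ∀ d i, i + d = n - 1 → affMap ρ S.t i 1 ≤ 1 := by
      intro d
      induction d with
      | zero =>
        intro i hi
        have : i = n - 1 := by omega
        rw [this, S.right1]
      | succ d ih =>
        intro i hi
        have h1 : i + 1 < n := by omega
        calc affMap ρ S.t i 1 ≤ affMap ρ S.t (i + 1) 0 := S.order i h1
          _ ≤ affMap ρ S.t (i + 1) 1 := hf01 _ h1
          _ ≤ 1 := ih (i + 1) (by omega)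
    intro i hi; exact key (n - 1 - i) i (by omega)
  have hf0 : ∀ i, i < n → 0 ≤ affMap ρ S.t i 0 := by
    intro i
    induction i with
    | zero => intro _; rw [S.left0]
    | succ i ih =>
      intro hi
      have hi' : i < n := by omega
      calc (0 : ℝ) ≤ affMap ρ S.t i 0 := ih hi'
        _ ≤ affMap ρ S.t i 1 := hf01 _ hi'
        _ ≤ affMap ρ S.t (i + 1) 0 := S.order i hi
  have hTbdd : Bornology.IsBounded S.T := S.compactT.isBounded
  have hT1 : ∀ x ∈ S.T, x ≤ 1 := by
    have hM : sSup S.T ∈ S.T := S.compactT.sSup_mem S.nonemptyT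
    have hM2 : sSup S.T ∈ ⋃ i ∈ Finset.range n, affMap ρ S.t i '' S.T := by
      rw [← S.invT]; exact hM
    have hMle : sSup S.T ≤ 1 := by
      simp only [Finset.mem_range, Set.mem_iUnion, Set.mem_image] at hM2
      obtain ⟨i, hi, y, hy, hxy⟩ := hM2
      have hyle : y ≤ sSup S.T := le_csSup hTbdd.bddAbove hy
      have h1 := hf1 i hi
      simp only [affMap] at hxy h1
      nlinarith [hpos i hi, hlt1 i hi,
        mul_nonneg (hpos i hi).le (sub_nonneg.2 hyle)]
    intro x hx; exact (le_csSup hTbdd.bddAbove hx).trans hMle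
  have hT0 : ∀ x ∈ S.T, 0 ≤ x := by
    have hM : sInf S.T ∈ S.T := S.compactT.sInf_mem S.nonemptyT
    have hM2 : sInf S.T ∈ ⋃ i ∈ Finset.range n, affMap ρ S.t i '' S.T := by
      rw [← S.invT]; exact hM
    have hMle : 0 ≤ sInf S.T := by
      simp only [Finset.mem_range, Set.mem_iUnion, Set.mem_image] at hM2
      obtain ⟨i, hi, y, hy, hxy⟩ := hM2
      have hyle : sInf S.T ≤ y := csInf_le hTbdd.bddBelow hy
      have h0 := hf0 i hi
      simp only [affMap] at hxy h0
      nlinarith [hpos i hi, hlt1 i hi,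
        mul_nonneg (hpos i hi).le (sub_nonneg.2 hyle)]
    intro x hx; exact hMle.trans (csInf_le hTbdd.bddBelow hx)
  have hmap : ∀ i, i < n → ∀ y, 0 ≤ y → y ≤ 1 →
      0 ≤ affMap ρ S.t i y ∧ affMap ρ S.t i y ≤ 1 := by
    intro i hi y hy0 hy1
    have h0 := hf0 i hi
    have h1 := hf1 i hi
    simp only [affMap] at h0 h1 ⊢
    constructor <;> nlinarith [hpos i hi]
  have hΨT : ∀ i, i < n → ∀ y ∈ S.T, affMap ρ S.t i y ∈ S.T := by
    intro i hi y hy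
    rw [S.invT]
    simp only [Finset.mem_range, Set.mem_iUnion, Set.mem_image]
    exact ⟨i, hi, y, hy, rfl⟩
  obtain ⟨x₀, hx₀⟩ := S.nonemptyT
  have h1T : (1 : ℝ) ∈ S.T := by
    have hrep1 : ∀ k, ρ (n - 1) ^ k * (x₀ - 1) + 1 ∈ S.T := by
      intro k
      induction k with
      | zero => simpa using hx₀
      | succ k ih =>
        have hmem := hΨT (n - 1) hn1 _ ih
        have heq : ρ (n - 1) ^ (k + 1) * (x₀ - 1) + 1
            = affMap ρ S.t (n - 1) (ρ (n - 1) ^ k * (x₀ - 1) + 1) := by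
          have hr1 := S.right1
          simp only [affMap] at hr1 ⊢
          linear_combination (-1 : ℝ) * hr1
        rw [heq]; exact hmem
    have hten : Filter.Tendsto (fun k => ρ (n - 1) ^ k * (x₀ - 1) + 1)
        Filter.atTop (nhds 1) := by
      have h0 : Filter.Tendsto (fun k : ℕ => ρ (n - 1) ^ k) Filter.atTop (nhds 0) :=
        tendsto_pow_atTop_nhds_zero_of_lt_one (hpos _ hn1).le (hlt1 _ hn1)
      have := (h0.mul_const (x₀ - 1)).add_const 1
      simpa using this
    exact S.compactT.isClosed.mem_of_tendsto hten (Filter.Eventually.of_forall hrep1)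
  have h0T : (0 : ℝ) ∈ S.T := by
    have h0n : 0 < n := hn0
    have hrep0 : ∀ k, ρ 0 ^ k * x₀ ∈ S.T := by
      intro k
      induction k with
      | zero => simpa using hx₀
      | succ k ih =>
        have hmem := hΨT 0 h0n _ ih
        have heq : ρ 0 ^ (k + 1) * x₀ = affMap ρ S.t 0 (ρ 0 ^ k * x₀) := by
          have hl0 := S.left0
          simp only [affMap] at hl0 ⊢
          linear_combination (-1 : ℝ) * hl0
        rw [heq]; exact hmem
    have hten : Filter.Tendsto (fun k => ρ 0 ^ k * x₀) Filter.atTop (nhds 0) := by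
      have h0 : Filter.Tendsto (fun k : ℕ => ρ 0 ^ k) Filter.atTop (nhds 0) :=
        tendsto_pow_atTop_nhds_zero_of_lt_one (hpos _ h0n).le (hlt1 _ h0n)
      have := h0.mul_const x₀
      simpa using this
    exact S.compactT.isClosed.mem_of_tendsto hten (Filter.Eventually.of_forall hrep0)
  -- the interval containment (upper bound)
  have hCsub : ∀ k, 1 ≤ k → Cset S α β i₀ τ k ⊆
      Set.Icc (affMap ρ S.t i₀ 1 - ρ (n - 1) ^ k) (affMap ρ S.t i₀ 1 + ρ (n - 1) ^ k) := by
    intro k hk x hx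
    obtain ⟨hτ1, hτ2, hτ3⟩ := hτ k hk
    have hρnk : 0 < ρ (n - 1) ^ k := pow_pos (hpos _ hn1) k
    simp only [Cset, Set.mem_union] at hx
    rcases hx with hx | hx
    · simp only [TouchingIFS.patchR, TouchingIFS.cyl, Set.mem_iUnion, Set.mem_image,
        Finset.mem_Ico] at hx
      obtain ⟨j, ⟨hj1, hj2⟩, y, hy, hxy⟩ := hx
      rw [affWord_append', affWord_append', affWord_singleton', affWord_singleton',
        affWord_replicate_fix ρ S.t (n - 1) 1 S.right1] at hxy
      obtain ⟨hA0, hA1⟩ := hmap j hj2 y (hT0 y hy) (hT1 y hy)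
      subst hxy
      set A := affMap ρ S.t j y with hA
      simp only [affMap] at hA0 hA1 ⊢
      constructor
      · nlinarith [mul_nonneg (sub_nonneg.2 (hlt1 i₀ hi0n).le) hρnk.le,
          mul_nonneg (mul_nonneg (hpos i₀ hi0n).le hρnk.le) hA0]
      · nlinarith [mul_nonneg (mul_nonneg (hpos i₀ hi0n).le hρnk.le) (sub_nonneg.2 hA1)]
    · simp only [TouchingIFS.patchL, TouchingIFS.cyl, Set.mem_iUnion, Set.mem_image,
        Finset.mem_range] at hx
      obtain ⟨j, hj, y, hy, hxy⟩ := hx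
      have hjn : j < n := lt_trans hj hα.2.1
      rw [affWord_append', affWord_append', affWord_singleton', affWord_singleton',
        affWord_replicate_fix ρ S.t 0 0 S.left0] at hxy
      obtain ⟨hA0, hA1⟩ := hmap j hjn y (hT0 y hy) (hT1 y hy)
      subst hxy
      set A := affMap ρ S.t j y with hA
      have htouch := hi₀.2
      have hρ0m : 0 < ρ 0 ^ τ k := pow_pos (hpos 0 hn0) _
      simp only [affMap] at hA0 hA1 htouch ⊢
      constructor
      · nlinarith [mul_nonneg (mul_nonneg (hpos (i₀ + 1) hi1).le hρ0m.le) hA0]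
      · nlinarith [mul_nonneg (sub_nonneg.2 (hlt1 (i₀ + 1) hi1).le) hρ0m.le,
          mul_nonneg (mul_nonneg (hpos (i₀ + 1) hi1).le hρ0m.le) (sub_nonneg.2 hA1)]
  refine ⟨ρ i₀ * ρ (n - 1), 2, mul_pos (hpos _ hi0n) (hpos _ hn1), by norm_num, ?_⟩
  intro k hk
  have hρnk : 0 < ρ (n - 1) ^ k := pow_pos (hpos _ hn1) k
  have hb : Bornology.IsBounded (Cset S α β i₀ τ k) :=
    (Metric.isBounded_Icc _ _).subset (hCsub k hk)
  constructor
  · -- lower bound via two explicit points of the right patch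
    set w := [i₀] ++ List.replicate k (n - 1) ++ [n - 1] with hw
    have hmemw : ∀ y ∈ S.T, affWord ρ S.t w y ∈ Cset S α β i₀ τ k := by
      intro y hy
      left
      simp only [TouchingIFS.patchR, TouchingIFS.cyl, Set.mem_iUnion, Set.mem_image,
        Finset.mem_Ico]
      exact ⟨n - 1, ⟨by have := hβ.1; omega, hn1⟩, y, hy, rfl⟩
    have hx1 := hmemw 0 h0T
    have hx2 := hmemw 1 h1T
    have hdist := Metric.dist_le_diam_of_mem hb hx2 hx1
    have hval : affWord ρ S.t w 1 - affWord ρ S.t w 0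
        = ρ i₀ * ρ (n - 1) * ρ (n - 1) ^ k := by
      rw [hw, affWord_append', affWord_append', affWord_singleton', affWord_singleton',
        affWord_append', affWord_append', affWord_singleton', affWord_singleton',
        affWord_replicate_fix ρ S.t (n - 1) 1 S.right1,
        affWord_replicate_fix ρ S.t (n - 1) 1 S.right1]
      simp only [affMap]; ring
    rw [Real.dist_eq, hval, abs_of_nonneg
      (mul_nonneg (mul_nonneg (hpos i₀ hi0n).le (hpos _ hn1).le) hρnk.le)] at hdist
    exact hdist
  · calc Metric.diam (Cset S α β i₀ τ k)
        ≤ Metric.diam (Set.Icc (affMap ρ S.t i₀ 1 - ρ (n - 1) ^ k)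
            (affMap ρ S.t i₀ 1 + ρ (n - 1) ^ k)) :=
          Metric.diam_mono (hCsub k hk) (Metric.isBounded_Icc _ _)
      _ = (affMap ρ S.t i₀ 1 + ρ (n - 1) ^ k) - (affMap ρ S.t i₀ 1 - ρ (n - 1) ^ k) :=
          Real.diam_Icc (by linarith)
      _ = 2 * ρ (n - 1) ^ k := by ring
end
end

section
/- For words i, j over {1,…,n} (possibly empty) and positive integers k, ℓ with |i| + k = |j| + ℓ, define C_i^k = Ψ_i(Cᵏ) where Cᵏ = R_k(T_{i₀}) ∪ L_{τ(k)}(T_{i₀+1}). If (i,k) ≠ (j,ℓ) then C_i^k ∩ C_j^ℓ = ∅. -/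
noncomputable section

open Set Metric MeasureTheory

variable {n : ℕ} {ρ : ℕ → ℝ}

namespace CsetAux
set_option linter.unusedSectionVars false

variable {n : ℕ} {ρ : ℕ → ℝ}

theorem affWord_append (r t : ℕ → ℝ) (u v : List ℕ) (x : ℝ) :
    affWord r t (u ++ v) x = affWord r t u (affWord r t v x) := by
  induction u with
  | nil => rfl
  | cons c u ih =>
      show affMap r t c (affWord r t (u ++ v) x) = affMap r t c (affWord r t u (affWord r t v x))
      rw [ih]

theorem affWord_cons (r t : ℕ → ℝ) (c : ℕ) (w : List ℕ) (x : ℝ) :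
    affWord r t (c :: w) x = affMap r t c (affWord r t w x) := rfl

variable (hρ : ContractionVec n ρ) (S : TouchingIFS n ρ)

section Basic
include hρ

theorem psi_mono {a : ℕ} (ha : a < n) {x y : ℝ} (h : x ≤ y) :
    affMap ρ S.t a x ≤ affMap ρ S.t a y := by
  have := hρ.pos a ha
  unfold affMap; nlinarith

theorem psi_smono {a : ℕ} (ha : a < n) {x y : ℝ} (h : x < y) :
    affMap ρ S.t a x < affMap ρ S.t a y := by
  have := hρ.pos a ha
  unfold affMap; nlinarith

theorem psi_inj {a : ℕ} (ha : a < n) {x y : ℝ}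
    (h : affMap ρ S.t a x = affMap ρ S.t a y) : x = y := by
  have hpos := hρ.pos a ha
  unfold affMap at h
  have : ρ a * x = ρ a * y := by linarith
  exact mul_left_cancel₀ (ne_of_gt hpos) this

/-- chain inequality: for `a < b < n`, `ψ a 1 ≤ ψ b 0`. -/
theorem chain : ∀ b, ∀ a, a < b → b < n → affMap ρ S.t a 1 ≤ affMap ρ S.t b 0 := by
  intro b
  induction b with
  | zero => intro a h; exact absurd h (Nat.not_lt_zero a)
  | succ b ih =>
      intro a hab hbn
      rcases Nat.lt_succ_iff_lt_or_eq.mp hab with h | h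
      · calc affMap ρ S.t a 1 ≤ affMap ρ S.t b 0 := ih a h (by omega)
          _ ≤ affMap ρ S.t b 1 := psi_mono hρ S (by omega) (by norm_num)
          _ ≤ affMap ρ S.t (b+1) 0 := S.order b hbn
      · subst h; exact S.order a hbn

theorem psi0_nonneg {a : ℕ} (ha : a < n) : 0 ≤ affMap ρ S.t a 0 := by
  rcases Nat.eq_zero_or_pos a with h | h
  · subst h; rw [S.left0]
  · calc (0:ℝ) = affMap ρ S.t 0 0 := S.left0.symm
      _ ≤ affMap ρ S.t 0 1 := psi_mono hρ S (by omega) (by norm_num)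
      _ ≤ affMap ρ S.t a 0 := chain hρ S a 0 h ha

theorem psi1_le_one {a : ℕ} (ha : a < n) : affMap ρ S.t a 1 ≤ 1 := by
  rcases Nat.lt_or_ge a (n-1) with h | h
  · calc affMap ρ S.t a 1 ≤ affMap ρ S.t (n-1) 0 := chain hρ S (n-1) a h (by omega)
      _ ≤ affMap ρ S.t (n-1) 1 := psi_mono hρ S (by omega) (by norm_num)
      _ = 1 := S.right1
  · have : a = n - 1 := by omega
    rw [this, S.right1]

theorem psi_mem_Icc {a : ℕ} (ha : a < n) {x : ℝ} (hx : x ∈ Set.Icc (0:ℝ) 1) :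
    affMap ρ S.t a x ∈ Set.Icc (0:ℝ) 1 := by
  constructor
  · calc (0:ℝ) ≤ affMap ρ S.t a 0 := psi0_nonneg hρ S ha
      _ ≤ affMap ρ S.t a x := psi_mono hρ S ha hx.1
  · calc affMap ρ S.t a x ≤ affMap ρ S.t a 1 := psi_mono hρ S ha hx.2
      _ ≤ 1 := psi1_le_one hρ S ha

/-- index monotonicity: for `a ≤ b < n` and `x ∈ [0,1]`, `ψ a x ≤ ψ b x`. -/
theorem psi_le_index {a b : ℕ} (hab : a ≤ b) (hb : b < n) {x : ℝ}
    (hx : x ∈ Set.Icc (0:ℝ) 1) : affMap ρ S.t a x ≤ affMap ρ S.t b x := by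
  rcases Nat.lt_or_ge a b with h | h
  · calc affMap ρ S.t a x ≤ affMap ρ S.t a 1 := psi_mono hρ S (by omega) hx.2
      _ ≤ affMap ρ S.t b 0 := chain hρ S b a h hb
      _ ≤ affMap ρ S.t b x := psi_mono hρ S hb hx.1
  · have : a = b := by omega
    rw [this]

theorem t_zero : S.t 0 = 0 := by
  have := S.left0; unfold affMap at this; linarith

theorem psi_zero_apply (x : ℝ) : affMap ρ S.t 0 x = ρ 0 * x := by
  unfold affMap; rw [t_zero hρ S]; ring

theorem t_top : S.t (n-1) = 1 - ρ (n-1) := by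
  have := S.right1; unfold affMap at this; linarith

theorem psi_top_apply (x : ℝ) : affMap ρ S.t (n-1) x = 1 - ρ (n-1) * (1 - x) := by
  unfold affMap; rw [t_top hρ S]; ring

theorem psi_top_zero : affMap ρ S.t (n-1) 0 = 1 - ρ (n-1) := by
  rw [psi_top_apply hρ S]; ring

/-- `ρ 0 + ρ (n-1) < 1`. -/
theorem rho_sum_lt : ρ 0 + ρ (n-1) < 1 := by
  have h3 := hρ.three_le
  have hsub : ({0, n-1} : Finset ℕ) ⊆ Finset.range n := by
    intro x hx
    simp only [Finset.mem_insert, Finset.mem_singleton] at hx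
    rcases hx with h | h <;> simp [Finset.mem_range] <;> omega
  have hle : ∑ i ∈ ({0, n-1} : Finset ℕ), ρ i ≤ ∑ i ∈ Finset.range n, ρ i := by
    apply Finset.sum_le_sum_of_subset_of_nonneg hsub
    intro i hi _
    exact le_of_lt (hρ.pos i (Finset.mem_range.mp hi))
  rw [Finset.sum_pair (by omega : (0:ℕ) ≠ n-1)] at hle
  linarith [hρ.sum_lt]

/-- The attractor lies in `[0,1]`. -/
theorem T_subset_Icc : S.T ⊆ Set.Icc (0:ℝ) 1 := by
  have hbddA := S.compactT.bddAbove
  have hbddB := S.compactT.bddBelow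
  have hM : sSup S.T ∈ S.T := S.compactT.sSup_mem S.nonemptyT
  have hm : sInf S.T ∈ S.T := S.compactT.sInf_mem S.nonemptyT
  have hsub : S.T ⊆ ⋃ i ∈ Finset.range n, affMap ρ S.t i '' S.T := le_of_eq S.invT
  have hMle : sSup S.T ≤ 1 := by
    have h2 := hsub hM
    simp only [Set.mem_iUnion, Finset.mem_range, Set.mem_image] at h2
    obtain ⟨a, ha, y, hy, hEq⟩ := h2
    have hyle : y ≤ sSup S.T := le_csSup hbddA hy
    have hpa := hρ.pos a ha
    have h1 : ρ a * 1 + S.t a ≤ 1 := psi1_le_one hρ S ha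
    have hlt1 := hρ.lt_one a ha
    unfold affMap at hEq
    nlinarith
  have hmge : 0 ≤ sInf S.T := by
    have h2 := hsub hm
    simp only [Set.mem_iUnion, Finset.mem_range, Set.mem_image] at h2
    obtain ⟨a, ha, y, hy, hEq⟩ := h2
    have hyge : sInf S.T ≤ y := csInf_le hbddB hy
    have hpa := hρ.pos a ha
    have h0 : 0 ≤ ρ a * 0 + S.t a := psi0_nonneg hρ S ha
    have hlt1 := hρ.lt_one a ha
    unfold affMap at hEq
    nlinarith
  intro x hx
  exact ⟨le_trans hmge (csInf_le hbddB hx), le_trans (le_csSup hbddA hx) hMle⟩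

theorem word_mem_Icc {w : List ℕ} (hw : ∀ c ∈ w, c < n) {x : ℝ}
    (hx : x ∈ Set.Icc (0:ℝ) 1) : affWord ρ S.t w x ∈ Set.Icc (0:ℝ) 1 := by
  induction w with
  | nil => exact hx
  | cons c w ih =>
      rw [affWord_cons]
      exact psi_mem_Icc hρ S (hw c (by simp)) (ih (fun d hd => hw d (by simp [hd])))

theorem word_mem_Ioo {w : List ℕ} (hw : ∀ c ∈ w, c < n) {x : ℝ}
    (hx : x ∈ Set.Ioo (0:ℝ) 1) : affWord ρ S.t w x ∈ Set.Ioo (0:ℝ) 1 := by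
  induction w with
  | nil => exact hx
  | cons c w ih =>
      rw [affWord_cons]
      have hc : c < n := hw c (by simp)
      have hz := ih (fun d hd => hw d (by simp [hd]))
      constructor
      · calc (0:ℝ) ≤ affMap ρ S.t c 0 := psi0_nonneg hρ S hc
          _ < affMap ρ S.t c (affWord ρ S.t w x) := psi_smono hρ S hc hz.1
      · calc affMap ρ S.t c (affWord ρ S.t w x) < affMap ρ S.t c 1 := psi_smono hρ S hc hz.2
          _ ≤ 1 := psi1_le_one hρ S hc

theorem affWord_replicate_top (m : ℕ) (x : ℝ) :
    affWord ρ S.t (List.replicate m (n-1)) x = 1 - ρ (n-1)^m * (1 - x) := by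
  induction m with
  | zero => simp [affWord]
  | succ m ih =>
      rw [List.replicate_succ, affWord_cons, ih, psi_top_apply hρ S]
      ring

theorem affWord_replicate_bot (m : ℕ) (x : ℝ) :
    affWord ρ S.t (List.replicate m 0) x = ρ 0 ^ m * x := by
  induction m with
  | zero => simp [affWord]
  | succ m ih =>
      rw [List.replicate_succ, affWord_cons, ih, psi_zero_apply hρ S]
      ring

end Basic

section CsetLemmas

variable {α β i₀ : ℕ} {τ : ℕ → ℕ}
variable (hα : S.alphaRun α) (hβ : S.betaRun β) (hi₀ : S.touch i₀)
variable (hρ1n : ρ (n-1) ≤ ρ 0) (hτ : tauSpec ρ n τ)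

theorem pow_le_self' {a : ℝ} (h0 : 0 ≤ a) (h1 : a ≤ 1) {m : ℕ} (hm : 1 ≤ m) : a ^ m ≤ a := by
  simpa using pow_le_pow_of_le_one h0 h1 hm

include hρ

theorem pow_lt_one'' {a : ℝ} (h0 : 0 ≤ a) (h1 : a < 1) {m : ℕ} (hm : 1 ≤ m) : a ^ m < 1 :=
  lt_of_le_of_lt (pow_le_self' h0 h1.le hm) h1

include hα hβ hi₀ hρ1n hτ

theorem mem_Cset_elim {k : ℕ} {x : ℝ} (hx : x ∈ Cset S α β i₀ τ k) :
    (∃ j, (1 ≤ j ∧ j < n) ∧ ∃ y ∈ S.T,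
      x = affMap ρ S.t i₀ (1 - ρ (n-1)^k * (1 - affMap ρ S.t j y)))
    ∨ (∃ j, j < n - 1 ∧ ∃ y ∈ S.T,
      x = affMap ρ S.t (i₀+1) (ρ 0 ^ (τ k) * affMap ρ S.t j y)) := by
  have h3 := hρ.three_le
  rcases hx with hx | hx
  · left
    simp only [TouchingIFS.patchR, Set.mem_iUnion, TouchingIFS.cyl, Set.mem_image,
      Finset.mem_Ico] at hx
    obtain ⟨j, ⟨hj1, hj2⟩, y, hy, hxy⟩ := hx
    refine ⟨j, ⟨by have := hβ.2.1; omega, hj2⟩, y, hy, ?_⟩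
    rw [← hxy]
    have heq : ([i₀] ++ List.replicate k (n-1) ++ [j] : List ℕ)
        = i₀ :: (List.replicate k (n-1) ++ [j]) := rfl
    rw [heq, affWord_cons, affWord_append, affWord_replicate_top hρ S]
    rfl
  · right
    simp only [TouchingIFS.patchL, Set.mem_iUnion, TouchingIFS.cyl, Set.mem_image,
      Finset.mem_range] at hx
    obtain ⟨j, hj, y, hy, hxy⟩ := hx
    refine ⟨j, by have := hα.2.1; omega, y, hy, ?_⟩
    rw [← hxy]
    have heq : ([i₀+1] ++ List.replicate (τ k) 0 ++ [j] : List ℕ)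
        = (i₀+1) :: (List.replicate (τ k) 0 ++ [j]) := rfl
    rw [heq, affWord_cons, affWord_append, affWord_replicate_bot hρ S]
    rfl

theorem Cset_lb {k : ℕ} (hk : 1 ≤ k) {x : ℝ} (hx : x ∈ Cset S α β i₀ τ k) :
    affMap ρ S.t i₀ (1 - ρ (n-1)^k) ≤ x := by
  have hin : i₀ + 1 < n := hi₀.1
  have hpk : (0:ℝ) ≤ ρ (n-1)^k := pow_nonneg (hρ.pos (n-1) (by omega)).le k
  rcases mem_Cset_elim hρ S hα hβ hi₀ hρ1n hτ hx with ⟨j, ⟨hj1, hj2⟩, y, hy, hxy⟩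
    | ⟨j, hj, y, hy, hxy⟩
  · subst hxy
    apply psi_mono hρ S (by omega)
    have hz : affMap ρ S.t j y ∈ Set.Icc (0:ℝ) 1 :=
      psi_mem_Icc hρ S hj2 (T_subset_Icc hρ S hy)
    nlinarith [hz.1]
  · subst hxy
    have h0 : (0:ℝ) ≤ ρ 0 ^ τ k * affMap ρ S.t j y := by
      have hz : affMap ρ S.t j y ∈ Set.Icc (0:ℝ) 1 :=
        psi_mem_Icc hρ S (by omega) (T_subset_Icc hρ S hy)
      have := pow_nonneg (hρ.pos 0 (by omega)).le (τ k)
      nlinarith [hz.1]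
    calc affMap ρ S.t i₀ (1 - ρ (n-1)^k) ≤ affMap ρ S.t i₀ 1 :=
          psi_mono hρ S (by omega) (by nlinarith)
      _ = affMap ρ S.t (i₀+1) 0 := hi₀.2
      _ ≤ affMap ρ S.t (i₀+1) (ρ 0 ^ τ k * affMap ρ S.t j y) := psi_mono hρ S hin h0

theorem Cset_ub {k : ℕ} (hk : 1 ≤ k) {x : ℝ} (hx : x ∈ Cset S α β i₀ τ k) :
    x ≤ affMap ρ S.t (i₀+1) (ρ 0 ^ τ k) := by
  have hin : i₀ + 1 < n := hi₀.1
  have hp0 : (0:ℝ) ≤ ρ 0 ^ τ k := pow_nonneg (hρ.pos 0 (by omega)).le (τ k)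
  have hpk : (0:ℝ) ≤ ρ (n-1)^k := pow_nonneg (hρ.pos (n-1) (by omega)).le k
  rcases mem_Cset_elim hρ S hα hβ hi₀ hρ1n hτ hx with ⟨j, ⟨hj1, hj2⟩, y, hy, hxy⟩
    | ⟨j, hj, y, hy, hxy⟩
  · subst hxy
    have hz : affMap ρ S.t j y ∈ Set.Icc (0:ℝ) 1 :=
      psi_mem_Icc hρ S hj2 (T_subset_Icc hρ S hy)
    calc affMap ρ S.t i₀ (1 - ρ (n-1)^k * (1 - affMap ρ S.t j y))
        ≤ affMap ρ S.t i₀ 1 := psi_mono hρ S (by omega) (by nlinarith [hz.2])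
      _ = affMap ρ S.t (i₀+1) 0 := hi₀.2
      _ ≤ affMap ρ S.t (i₀+1) (ρ 0 ^ τ k) := psi_mono hρ S hin hp0
  · subst hxy
    apply psi_mono hρ S hin
    have hz : affMap ρ S.t j y ∈ Set.Icc (0:ℝ) 1 :=
      psi_mem_Icc hρ S (by omega) (T_subset_Icc hρ S hy)
    nlinarith [hz.2]

theorem Cset_mem_Ioo {k : ℕ} (hk : 1 ≤ k) {x : ℝ} (hx : x ∈ Cset S α β i₀ τ k) :
    x ∈ Set.Ioo (0:ℝ) 1 := by
  have hin : i₀ + 1 < n := hi₀.1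
  have hρtop := hρ.pos (n-1) (by omega)
  have hρ0 := hρ.pos 0 (by omega)
  constructor
  · have h1 : ρ (n-1)^k < 1 :=
      pow_lt_one'' hρ (hρtop.le) (hρ.lt_one (n-1) (by omega)) hk
    calc (0:ℝ) ≤ affMap ρ S.t i₀ 0 := psi0_nonneg hρ S (by omega)
      _ < affMap ρ S.t i₀ (1 - ρ (n-1)^k) := psi_smono hρ S (by omega) (by linarith)
      _ ≤ x := Cset_lb hρ S hα hβ hi₀ hρ1n hτ hk hx
  · have h1 : ρ 0 ^ τ k < 1 :=
      pow_lt_one'' hρ (hρ0.le) (hρ.lt_one 0 (by omega)) (hτ k hk).1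
    calc x ≤ affMap ρ S.t (i₀+1) (ρ 0 ^ τ k) := Cset_ub hρ S hα hβ hi₀ hρ1n hτ hk hx
      _ < affMap ρ S.t (i₀+1) 1 := psi_smono hρ S hin h1
      _ ≤ 1 := psi1_le_one hρ S hin

end CsetLemmas

section MainLemmas

variable {α β i₀ : ℕ} {τ : ℕ → ℕ}
variable (hα : S.alphaRun α) (hβ : S.betaRun β) (hi₀ : S.touch i₀)
variable (hρ1n : ρ (n-1) ≤ ρ 0) (hτ : tauSpec ρ n τ)

include hρ hα hβ hi₀ hρ1n hτ

/-- Upper bound: any point of `Ψ_v(C^ℓ)` is `< 1 - ρ_{n}^{|v|+ℓ+1}(1-ρ₁)`. -/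
theorem UB {ℓ : ℕ} (hℓ : 1 ≤ ℓ) (v : List ℕ) (hv : ∀ c ∈ v, c < n) {z : ℝ}
    (hz : z ∈ Cset S α β i₀ τ ℓ) :
    affWord ρ S.t v z < 1 - ρ (n-1) ^ (v.length + ℓ + 1) * (1 - ρ 0) := by
  have h3 := hρ.three_le
  have hin : i₀ + 1 < n := hi₀.1
  have hρt := hρ.pos (n-1) (by omega)
  have hρt1 := hρ.lt_one (n-1) (by omega)
  have hρ0 := hρ.pos 0 (by omega)
  have hρ01 := hρ.lt_one 0 (by omega)
  have hsum := rho_sum_lt hρ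
  induction v with
  | nil =>
      show z < 1 - ρ (n-1) ^ (List.length ([]:List ℕ) + ℓ + 1) * (1 - ρ 0)
      simp only [List.length_nil, Nat.zero_add]
      have h1 : z ≤ affMap ρ S.t (i₀+1) (ρ 0 ^ τ ℓ) := Cset_ub hρ S hα hβ hi₀ hρ1n hτ hℓ hz
      have h2 : ρ 0 ^ τ ℓ ≤ ρ (n-1) ^ ℓ := (hτ ℓ hℓ).2.2
      have hA : ρ (n-1) ^ ℓ ≤ ρ (n-1) := pow_le_self' hρt.le hρt1.le hℓ
      have hAnn : (0:ℝ) ≤ ρ (n-1) ^ ℓ := pow_nonneg hρt.le ℓ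
      have h4 : affMap ρ S.t (i₀+1) (ρ 0 ^ τ ℓ) ≤ affMap ρ S.t (i₀+1) (ρ (n-1) ^ ℓ) :=
        psi_mono hρ S hin h2
      have h5 : affMap ρ S.t (i₀+1) (ρ (n-1) ^ ℓ) ≤ affMap ρ S.t (n-1) (ρ (n-1) ^ ℓ) :=
        psi_le_index hρ S (by omega) (by omega) ⟨hAnn, by linarith⟩
      rw [psi_top_apply hρ S] at h5
      have hkey : ρ (n-1) ^ ℓ * (2 - ρ 0) < 1 := by nlinarith
      rw [pow_succ]
      nlinarith
  | cons c v' ih =>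
      have hv' : ∀ c ∈ v', c < n := fun d hd => hv d (by simp [hd])
      have hc : c < n := hv c (by simp)
      have hu : affWord ρ S.t v' z ∈ Set.Ioo (0:ℝ) 1 :=
        word_mem_Ioo hρ S hv' (Cset_mem_Ioo hρ S hα hβ hi₀ hρ1n hτ hℓ hz)
      have hub := ih hv'
      rw [affWord_cons]
      have hlenc : (c :: v').length + ℓ + 1 = (v'.length + ℓ + 1) + 1 := by
        simp [List.length_cons]; omega
      rw [hlenc]
      rcases eq_or_ne c (n-1) with hc1 | hc1
      · subst hc1
        rw [psi_top_apply hρ S, pow_succ]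
        nlinarith [pow_nonneg hρt.le (v'.length + ℓ + 1)]
      · have hclt : c < n - 1 := by omega
        have h1 : affMap ρ S.t c (affWord ρ S.t v' z) < affMap ρ S.t c 1 :=
          psi_smono hρ S hc hu.2
        have h2 : affMap ρ S.t c 1 ≤ affMap ρ S.t (n-1) 0 := chain hρ S (n-1) c hclt (by omega)
        rw [psi_top_zero hρ S] at h2
        have hA : ρ (n-1) ^ (v'.length + ℓ + 1 + 1) ≤ ρ (n-1) :=
          pow_le_self' hρt.le hρt1.le (by omega)
        have hAnn : (0:ℝ) ≤ ρ (n-1) ^ (v'.length + ℓ + 1 + 1) := pow_nonneg hρt.le _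
        nlinarith

/-- Lower bound: any point of `Ψ_v(C^ℓ)` is `> ρ₁^{|v|+ℓ+1}(1-ρₙ)`. -/
theorem LB {ℓ : ℕ} (hℓ : 1 ≤ ℓ) (v : List ℕ) (hv : ∀ c ∈ v, c < n) {z : ℝ}
    (hz : z ∈ Cset S α β i₀ τ ℓ) :
    ρ 0 ^ (v.length + ℓ + 1) * (1 - ρ (n-1)) < affWord ρ S.t v z := by
  have h3 := hρ.three_le
  have hin : i₀ + 1 < n := hi₀.1
  have hρt := hρ.pos (n-1) (by omega)
  have hρt1 := hρ.lt_one (n-1) (by omega)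
  have hρ0 := hρ.pos 0 (by omega)
  have hρ01 := hρ.lt_one 0 (by omega)
  induction v with
  | nil =>
      show ρ 0 ^ (List.length ([]:List ℕ) + ℓ + 1) * (1 - ρ (n-1)) < z
      simp only [List.length_nil, Nat.zero_add]
      have hA : ρ (n-1) ^ ℓ ≤ ρ (n-1) := pow_le_self' hρt.le hρt1.le hℓ
      have hAnn : (0:ℝ) ≤ ρ (n-1) ^ ℓ := pow_nonneg hρt.le ℓ
      have h1 : affMap ρ S.t i₀ (1 - ρ (n-1)^ℓ) ≤ z := Cset_lb hρ S hα hβ hi₀ hρ1n hτ hℓ hz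
      have h2 : affMap ρ S.t 0 (1 - ρ (n-1)^ℓ) ≤ affMap ρ S.t i₀ (1 - ρ (n-1)^ℓ) :=
        psi_le_index hρ S (by omega) (by omega) ⟨by linarith, by linarith⟩
      rw [psi_zero_apply hρ S] at h2
      have hB : ρ 0 ^ ℓ < 1 := pow_lt_one'' hρ hρ0.le hρ01 hℓ
      have hBnn : (0:ℝ) ≤ ρ 0 ^ ℓ := pow_nonneg hρ0.le ℓ
      have hkey : ρ 0 ^ ℓ * (1 - ρ (n-1)) < 1 - ρ (n-1)^ℓ := by
        nlinarith [mul_pos (by linarith : (0:ℝ) < 1 - ρ 0 ^ ℓ)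
          (by linarith : (0:ℝ) < 1 - ρ (n-1))]
      rw [pow_succ]
      nlinarith [mul_lt_mul_of_pos_left hkey hρ0]
  | cons c v' ih =>
      have hv' : ∀ c ∈ v', c < n := fun d hd => hv d (by simp [hd])
      have hc : c < n := hv c (by simp)
      have hu : affWord ρ S.t v' z ∈ Set.Ioo (0:ℝ) 1 :=
        word_mem_Ioo hρ S hv' (Cset_mem_Ioo hρ S hα hβ hi₀ hρ1n hτ hℓ hz)
      have hlb := ih hv'
      rw [affWord_cons]
      have hlenc : (c :: v').length + ℓ + 1 = (v'.length + ℓ + 1) + 1 := by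
        simp [List.length_cons]; omega
      rw [hlenc]
      rcases eq_or_ne c 0 with hc1 | hc1
      · subst hc1
        rw [psi_zero_apply hρ S, pow_succ]
        nlinarith
      · have hc2 : 1 ≤ c := by omega
        have h1 : affMap ρ S.t c 0 < affMap ρ S.t c (affWord ρ S.t v' z) :=
          psi_smono hρ S hc hu.1
        have h2 : affMap ρ S.t 0 1 ≤ affMap ρ S.t c 0 := chain hρ S c 0 hc2 hc
        rw [psi_zero_apply hρ S] at h2
        have hA : ρ 0 ^ (v'.length + ℓ + 1 + 1) ≤ ρ 0 :=
          pow_le_self' hρ0.le hρ01.le (by omega)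
        have hAnn : (0:ℝ) ≤ ρ 0 ^ (v'.length + ℓ + 1 + 1) := pow_nonneg hρ0.le _
        nlinarith

/-- Case B: `C^k` is disjoint from `Ψ_{b::w}(C^ℓ)` when `|w|+1+ℓ = k`. -/
theorem caseB (b : ℕ) (w : List ℕ) (hb : b < n) (hw : ∀ c ∈ w, c < n)
    (k ℓ : ℕ) (hk : 1 ≤ k) (hℓ : 1 ≤ ℓ) (hlen : w.length + 1 + ℓ = k) :
    Cset S α β i₀ τ k ∩ (affWord ρ S.t (b :: w) '' Cset S α β i₀ τ ℓ) = ∅ := by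
  have h3 := hρ.three_le
  have hin : i₀ + 1 < n := hi₀.1
  have hρt := hρ.pos (n-1) (by omega)
  have hρt1 := hρ.lt_one (n-1) (by omega)
  have hρ0 := hρ.pos 0 (by omega)
  have hρ01 := hρ.lt_one 0 (by omega)
  have hpk1 : ρ (n-1) ^ k < 1 := pow_lt_one'' hρ hρt.le hρt1 hk
  have hpknn : (0:ℝ) ≤ ρ (n-1) ^ k := pow_nonneg hρt.le k
  have hp0τ1 : ρ 0 ^ τ k < 1 := pow_lt_one'' hρ hρ0.le hρ01 (hτ k hk).1
  have hp0τnn : (0:ℝ) ≤ ρ 0 ^ τ k := pow_nonneg hρ0.le (τ k)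
  rw [Set.eq_empty_iff_forall_notMem]
  rintro x ⟨hx1, z, hz, hxz⟩
  rw [affWord_cons] at hxz
  have hu : affWord ρ S.t w z ∈ Set.Ioo (0:ℝ) 1 :=
    word_mem_Ioo hρ S hw (Cset_mem_Ioo hρ S hα hβ hi₀ hρ1n hτ hℓ hz)
  set u := affWord ρ S.t w z with hudef
  subst hxz
  by_cases hb1 : b < i₀
  · have h1 : affMap ρ S.t b u < affMap ρ S.t b 1 := psi_smono hρ S hb hu.2
    have h2 : affMap ρ S.t b 1 ≤ affMap ρ S.t i₀ 0 := chain hρ S i₀ b hb1 (by omega)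
    have h4 : affMap ρ S.t i₀ 0 ≤ affMap ρ S.t i₀ (1 - ρ (n-1)^k) :=
      psi_mono hρ S (by omega) (by linarith)
    have h5 := Cset_lb hρ S hα hβ hi₀ hρ1n hτ hk hx1
    linarith
  · by_cases hb2 : i₀ + 1 < b
    · have h1 : affMap ρ S.t b 0 < affMap ρ S.t b u := psi_smono hρ S hb hu.1
      have h2 : affMap ρ S.t (i₀+1) 1 ≤ affMap ρ S.t b 0 := chain hρ S b (i₀+1) hb2 hb
      have h4 : affMap ρ S.t (i₀+1) (ρ 0 ^ τ k) ≤ affMap ρ S.t (i₀+1) 1 :=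
        psi_mono hρ S hin (by linarith)
      have h5 := Cset_ub hρ S hα hβ hi₀ hρ1n hτ hk hx1
      linarith
    · by_cases hb3 : b = i₀
      · obtain rfl : i₀ = b := hb3.symm
        rcases mem_Cset_elim hρ S hα hβ hi₀ hρ1n hτ hx1 with
          ⟨j, ⟨hj1, hj2⟩, y, hy, hxy⟩ | ⟨j, hj, y, hy, hxy⟩
        · have hEq : u = 1 - ρ (n-1)^k * (1 - affMap ρ S.t j y) :=
            psi_inj hρ S (by omega) hxy
          have hyT := T_subset_Icc hρ S hy
          have hz0 : affMap ρ S.t 0 1 ≤ affMap ρ S.t j 0 := chain hρ S j 0 hj1 hj2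
          rw [psi_zero_apply hρ S] at hz0
          have hz1 : affMap ρ S.t j 0 ≤ affMap ρ S.t j y := psi_mono hρ S hj2 hyT.1
          have hub := UB hρ S hα hβ hi₀ hρ1n hτ hℓ w hw hz
          have hexp : w.length + ℓ + 1 = k := by omega
          rw [hexp] at hub
          rw [← hudef] at hub
          nlinarith
        · have hs : (0:ℝ) ≤ ρ 0 ^ τ k * affMap ρ S.t j y := by
            have := psi0_nonneg hρ S (show j < n by omega)
            have := psi_mono hρ S (show j < n by omega) (T_subset_Icc hρ S hy).1
            nlinarith
          have h1 : affMap ρ S.t i₀ u < affMap ρ S.t i₀ 1 := psi_smono hρ S (by omega) hu.2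
          have h2 : affMap ρ S.t i₀ 1 = affMap ρ S.t (i₀+1) 0 := hi₀.2
          have h4 : affMap ρ S.t (i₀+1) 0 ≤
              affMap ρ S.t (i₀+1) (ρ 0 ^ τ k * affMap ρ S.t j y) := psi_mono hρ S hin hs
          have hcon := h1.trans_le (h2.le.trans h4)
          rw [← hxy] at hcon
          exact lt_irrefl _ hcon
      · have hb4 : b = i₀ + 1 := by omega
        subst hb4
        rcases mem_Cset_elim hρ S hα hβ hi₀ hρ1n hτ hx1 with
          ⟨j, ⟨hj1, hj2⟩, y, hy, hxy⟩ | ⟨j, hj, y, hy, hxy⟩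
        · have hyT := T_subset_Icc hρ S hy
          have hz1 : affMap ρ S.t j y ≤ affMap ρ S.t j 1 := psi_mono hρ S hj2 hyT.2
          have hz2 : affMap ρ S.t j 1 ≤ 1 := psi1_le_one hρ S hj2
          have h1 : affMap ρ S.t i₀ (1 - ρ (n-1)^k * (1 - affMap ρ S.t j y)) ≤
              affMap ρ S.t i₀ 1 := psi_mono hρ S (by omega) (by nlinarith)
          have h2 : affMap ρ S.t i₀ 1 = affMap ρ S.t (i₀+1) 0 := hi₀.2
          have h4 : affMap ρ S.t (i₀+1) 0 < affMap ρ S.t (i₀+1) u := psi_smono hρ S hin hu.1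
          have hcon := (h1.trans_eq h2).trans_lt h4
          rw [← hxy] at hcon
          exact lt_irrefl _ hcon
        · have hEq : u = ρ 0 ^ τ k * affMap ρ S.t j y := psi_inj hρ S hin hxy
          have hyT := T_subset_Icc hρ S hy
          have hz1 : affMap ρ S.t j y ≤ affMap ρ S.t j 1 := psi_mono hρ S (by omega) hyT.2
          have hz2 : affMap ρ S.t j 1 ≤ affMap ρ S.t (n-1) 0 := chain hρ S (n-1) j hj (by omega)
          rw [psi_top_zero hρ S] at hz2
          have hz0 : 0 ≤ affMap ρ S.t j y := by
            have := psi0_nonneg hρ S (show j < n by omega)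
            have := psi_mono hρ S (show j < n by omega) hyT.1
            linarith
          have hτk : ρ 0 ^ τ k ≤ ρ (n-1) ^ k := (hτ k hk).2.2
          have hk0 : ρ (n-1) ^ k ≤ ρ 0 ^ k := pow_le_pow_left₀ hρt.le hρ1n k
          have hlb := LB hρ S hα hβ hi₀ hρ1n hτ hℓ w hw hz
          have hexp : w.length + ℓ + 1 = k := by omega
          rw [hexp] at hlb
          rw [← hudef] at hlb
          have hunn : (0:ℝ) ≤ ρ 0 ^ k := pow_nonneg hρ0.le k
          nlinarith

/-- Separation of distinct first letters. -/
theorem sep {a b : ℕ} (hab : a < b) (hb : b < n) {u u' : ℝ}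
    (hu : u ∈ Set.Ioo (0:ℝ) 1) (hu' : u' ∈ Set.Ioo (0:ℝ) 1) :
    affMap ρ S.t a u < affMap ρ S.t b u' := by
  calc affMap ρ S.t a u < affMap ρ S.t a 1 := psi_smono hρ S (by omega) hu.2
    _ ≤ affMap ρ S.t b 0 := chain hρ S b a hab hb
    _ < affMap ρ S.t b u' := psi_smono hρ S hb hu'.1

theorem main_aux : ∀ (i : List ℕ), (∀ a ∈ i, a < n) → ∀ (j : List ℕ), (∀ a ∈ j, a < n) →
    ∀ k ℓ : ℕ, 1 ≤ k → 1 ≤ ℓ → i.length + k = j.length + ℓ → ¬(i = j ∧ k = ℓ) →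
    (affWord ρ S.t i '' Cset S α β i₀ τ k) ∩ (affWord ρ S.t j '' Cset S α β i₀ τ ℓ) = ∅ := by
  intro i
  induction i with
  | nil =>
      intro hi j hj k ℓ hk hℓ hlen hne
      cases j with
      | nil =>
          simp only [List.length_nil] at hlen
          exact absurd ⟨rfl, by omega⟩ hne
      | cons b j' =>
          have hidw : affWord ρ S.t [] = id := rfl
          rw [hidw, Set.image_id]
          refine caseB hρ S hα hβ hi₀ hρ1n hτ b j' (hj b (by simp))
            (fun c hc => hj c (by simp [hc])) k ℓ hk hℓ ?_
          simp only [List.length_nil, List.length_cons] at hlen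
          omega
  | cons a i' IH =>
      intro hi j hj k ℓ hk hℓ hlen hne
      have ha : a < n := hi a (by simp)
      have hi' : ∀ c ∈ i', c < n := fun c hc => hi c (by simp [hc])
      cases j with
      | nil =>
          rw [Set.inter_comm]
          have hidw : affWord ρ S.t [] = id := rfl
          rw [hidw, Set.image_id]
          refine caseB hρ S hα hβ hi₀ hρ1n hτ a i' ha hi' ℓ k hℓ hk ?_
          simp only [List.length_nil, List.length_cons] at hlen
          omega
      | cons b j' =>
          have hbn : b < n := hj b (by simp)
          have hj' : ∀ c ∈ j', c < n := fun c hc => hj c (by simp [hc])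
          have hlen' : i'.length + k = j'.length + ℓ := by
            simp only [List.length_cons] at hlen; omega
          by_cases hab : a = b
          · subst hab
            rw [Set.eq_empty_iff_forall_notMem]
            rintro x ⟨⟨z, hz, hxz⟩, ⟨z', hz', hxz'⟩⟩
            rw [affWord_cons] at hxz hxz'
            have hEq : affWord ρ S.t i' z = affWord ρ S.t j' z' :=
              psi_inj hρ S ha (hxz.trans hxz'.symm)
            have hIH := IH hi' j' hj' k ℓ hk hℓ hlen'
              (by rintro ⟨h1, h2⟩; exact hne ⟨by rw [h1], h2⟩)
            have hmem : affWord ρ S.t i' z ∈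
                (affWord ρ S.t i' '' Cset S α β i₀ τ k) ∩
                (affWord ρ S.t j' '' Cset S α β i₀ τ ℓ) :=
              ⟨⟨z, hz, rfl⟩, ⟨z', hz', hEq.symm⟩⟩
            rw [hIH] at hmem
            exact hmem
          · rw [Set.eq_empty_iff_forall_notMem]
            rintro x ⟨⟨z, hz, hxz⟩, ⟨z', hz', hxz'⟩⟩
            rw [affWord_cons] at hxz hxz'
            have hu : affWord ρ S.t i' z ∈ Set.Ioo (0:ℝ) 1 :=
              word_mem_Ioo hρ S hi' (Cset_mem_Ioo hρ S hα hβ hi₀ hρ1n hτ hk hz)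
            have hu' : affWord ρ S.t j' z' ∈ Set.Ioo (0:ℝ) 1 :=
              word_mem_Ioo hρ S hj' (Cset_mem_Ioo hρ S hα hβ hi₀ hρ1n hτ hℓ hz')
            rcases Nat.lt_or_ge a b with h | h
            · have := sep hρ S hα hβ hi₀ hρ1n hτ h hbn hu hu'
              rw [hxz, hxz'] at this
              exact lt_irrefl x this
            · have hba : b < a := by omega
              have := sep hρ S hα hβ hi₀ hρ1n hτ hba ha hu' hu
              rw [hxz, hxz'] at this
              exact lt_irrefl x this

end MainLemmas

end CsetAux

/-- distinct sets `C_i^k` of the same level `|i| + k` are disjoint. -/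
theorem Cset_same_level_disjoint {n : ℕ} {ρ : ℕ → ℝ} (hρ : ContractionVec n ρ)
    (S : TouchingIFS n ρ) (α β i₀ : ℕ)
    (hα : S.alphaRun α) (hβ : S.betaRun β) (hi₀ : S.touch i₀)
    (hρ1n : ρ (n - 1) ≤ ρ 0) (τ : ℕ → ℕ) (hτ : tauSpec ρ n τ)
    (i j : List ℕ) (hi : ∀ a ∈ i, a < n) (hj : ∀ a ∈ j, a < n)
    (k ℓ : ℕ) (hk : 1 ≤ k) (hℓ : 1 ≤ ℓ)
    (hlen : i.length + k = j.length + ℓ)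
    (hne : ¬(i = j ∧ k = ℓ)) :
    (affWord ρ S.t i '' Cset S α β i₀ τ k) ∩ (affWord ρ S.t j '' Cset S α β i₀ τ ℓ) = ∅ :=
  CsetAux.main_aux hρ S hα hβ hi₀ hρ1n hτ i hi j hj k ℓ hk hℓ hlen hne
end
end
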